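/- arXiv:2204.08059 — 6 statements merged into one kernel-verified Lean document; each statement's English description precedes it below -/
import Mathlib

section
/- Let S be a real d×d matrix, Σₒ a positive-definite symmetric real d×d matrix, and let {Xₙ} be the Gauss-Markov chain with X₁ ~ N(0,Σₒ) and X_{n+1} = S Xₙ + Gₙ where Gₙ are i.i.d. standard Gaussians on ℝ^d independent of X₁. Then for each N ≥ 1 the log Radon–Nikodym derivative of the law of (X₁,…,X_N) with respect to the law of (X_N,…,X₁), evaluated at (X₁,…,X_N), equals (1/2)⟨X₁,(I−Σₒ⁻¹−SᵀS)X₁⟩ + (1/2)⟨X_N,(Σₒ⁻¹+SᵀS−I)X_N⟩ + Σ_{n=2}^N ⟨Xₙ,(S−Sᵀ)X_{n−1}⟩. -/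
/-!
Both laws have densities with respect to Lebesgue measure: `μ⁺` has density `c · exp E` for the
quadratic exponent `E`, and since reversing the coordinates is a Lebesgue-measure-preserving
involution, `μ⁻` has density `c · exp (E ∘ rev)`. Hence `dμ⁺/dμ⁻ = exp (E - E ∘ rev)` and the
normalizing constant cancels. Reversal turns each residual `xₙ₊₁ - S xₙ` into `xₙ - S xₙ₊₁`, and
the difference of their squared norms is `q xₙ - q xₙ₊₁ + 2 ⟨xₙ₊₁, (S - Sᵀ) xₙ⟩` with
`q x = ⟨x, (1 - SᵀS) x⟩`; the `q`-terms telescope to the boundary terms at `X₁` and `X_N`.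
-/

open Matrix MeasureTheory

namespace MeasureTheory

variable {α : Type*} [MeasurableSpace α] {ν : Measure α}

theorem MeasurePreserving.map_withDensity_of_involutive {R : α → α}
    (hR : MeasurePreserving R ν ν) (hinv : Function.Involutive R) (f : α → ENNReal) :
    (ν.withDensity f).map R = ν.withDensity (f ∘ R) := by
  have hemb := (MeasurableEquiv.ofInvolutive R hinv hR.measurable).measurableEmbedding
  ext s hs
  rw [Measure.map_apply hR.measurable hs, withDensity_apply _ (hR.measurable hs),
    withDensity_apply _ hs, ← hR.setLIntegral_comp_preimage_emb hemb, ← Set.preimage_comp,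
    hinv.comp_self, Set.preimage_id]
  rfl

theorem rnDeriv_withDensity_ofReal_mul_exp [SigmaFinite ν] {E F : α → ℝ}
    (hE : Measurable E) (hF : Measurable F) (c : ℝ) :
    (ν.withDensity fun x => ENNReal.ofReal (c * Real.exp (E x))).rnDeriv
        (ν.withDensity fun x => ENNReal.ofReal (c * Real.exp (F x)))
      =ᵐ[ν.withDensity fun x => ENNReal.ofReal (c * Real.exp (E x))]
        fun x => ENNReal.ofReal (Real.exp (E x - F x)) := by
  rcases le_or_gt c 0 with hc | hc
  · have hzero : (fun x => ENNReal.ofReal (c * Real.exp (E x))) = 0 := by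
      funext x
      exact ENNReal.ofReal_of_nonpos (mul_nonpos_of_nonpos_of_nonneg hc (Real.exp_nonneg _))
    simp [hzero, Filter.EventuallyEq]
  have hρ : Measurable fun x => ENNReal.ofReal (Real.exp (E x - F x)) := by fun_prop
  have hfactor : (ν.withDensity fun x => ENNReal.ofReal (c * Real.exp (E x)))
      = (ν.withDensity fun x => ENNReal.ofReal (c * Real.exp (F x))).withDensity
          fun x => ENNReal.ofReal (Real.exp (E x - F x)) := by
    rw [← withDensity_mul _ (by fun_prop) hρ]
    congr 1
    funext x
    rw [Pi.mul_apply, ← ENNReal.ofReal_mul (by positivity), mul_assoc, ← Real.exp_add,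
      add_sub_cancel]
  have : SigmaFinite (ν.withDensity fun x => ENNReal.ofReal (c * Real.exp (F x))) :=
    SigmaFinite.withDensity_of_ne_top' fun _ => ENNReal.ofReal_ne_top
  rw [hfactor]
  exact (withDensity_absolutelyContinuous _ _).ae_le (Measure.rnDeriv_withDensity _ hρ)

theorem log_rnDeriv_map_withDensity_ofReal_mul_exp [SigmaFinite ν] {R : α → α}
    (hR : MeasurePreserving R ν ν) (hinv : Function.Involutive R) {E : α → ℝ}
    (hE : Measurable E) (c : ℝ) :
    ∀ᵐ x ∂(ν.withDensity fun x => ENNReal.ofReal (c * Real.exp (E x))),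
      Real.log (((ν.withDensity fun x => ENNReal.ofReal (c * Real.exp (E x))).rnDeriv
          ((ν.withDensity fun x => ENNReal.ofReal (c * Real.exp (E x))).map R) x).toReal)
        = E x - E (R x) := by
  rw [hR.map_withDensity_of_involutive hinv, Function.comp_def]
  filter_upwards [rnDeriv_withDensity_ofReal_mul_exp hE (hE.comp hR.measurable) c] with x hx
  simp only [Function.comp_apply] at hx
  rw [hx, ENNReal.toReal_ofReal (Real.exp_nonneg _), Real.log_exp]

theorem volume_measurePreserving_comp_finRev {β : Type*} [MeasureSpace β]
    [SigmaFinite (volume : Measure β)] (n : ℕ) :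
    MeasurePreserving (fun (x : Fin n → β) i => x (Fin.rev i)) := by
  have hrev : (fun (x : Fin n → β) i => x (Fin.rev i))
      = MeasurableEquiv.piCongrLeft (fun _ : Fin n => β) Fin.revPerm := by
    ext x i
    simp [MeasurableEquiv.coe_piCongrLeft, Equiv.piCongrLeft_apply_eq_cast]
  rw [hrev]
  exact volume_measurePreserving_piCongrLeft _ _

end MeasureTheory

theorem Fin.sum_castSucc_sub_succ {M : Type*} [AddCommGroup M] {N : ℕ} (g : Fin (N + 1) → M) :
    ∑ n : Fin N, (g n.castSucc - g n.succ) = g 0 - g (Fin.last N) := by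
  induction N with
  | zero => simp
  | succ N ih =>
    rw [Fin.sum_univ_castSucc]
    simp only [Fin.succ_castSucc, ih fun i => g i.castSucc, Fin.castSucc_zero, Fin.succ_last]
    abel

theorem Matrix.sub_mulVec_dotProduct_self_sub_swap {R n : Type*} [CommRing R] [Fintype n]
    [DecidableEq n] (S : Matrix n n R) (a b : n → R) :
    (b - S *ᵥ a) ⬝ᵥ (b - S *ᵥ a) - (a - S *ᵥ b) ⬝ᵥ (a - S *ᵥ b)
      = b ⬝ᵥ (1 - Sᵀ * S) *ᵥ b - a ⬝ᵥ (1 - Sᵀ * S) *ᵥ a + 2 * (a ⬝ᵥ (S - Sᵀ) *ᵥ b) := by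
  simp only [sub_mulVec, one_mulVec, ← mulVec_mulVec, dotProduct_sub, sub_dotProduct,
    dotProduct_transpose_mulVec, dotProduct_comm (S *ᵥ a) b, dotProduct_comm (S *ᵥ b) a]
  ring

/-- The log-density of the chain up to its normalizing constant, with `P` in the role of `Σₒ⁻¹`. -/
noncomputable def gaussMarkovExponent {d N : ℕ} (S P : Matrix (Fin d) (Fin d) ℝ)
    (x : Fin (N + 1) → Fin d → ℝ) : ℝ :=
  -(1 / 2) * (x 0 ⬝ᵥ P *ᵥ x 0)
    - (1 / 2) * ∑ n : Fin N,
        (x n.succ - S *ᵥ x n.castSucc) ⬝ᵥ (x n.succ - S *ᵥ x n.castSucc)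

theorem continuous_gaussMarkovExponent {d N : ℕ} (S P : Matrix (Fin d) (Fin d) ℝ) :
    Continuous (gaussMarkovExponent (N := N) S P) := by
  unfold gaussMarkovExponent
  fun_prop

theorem gaussMarkovExponent_sub_rev {d N : ℕ} (S P : Matrix (Fin d) (Fin d) ℝ)
    (x : Fin (N + 1) → Fin d → ℝ) :
    gaussMarkovExponent S P x - gaussMarkovExponent S P (fun i => x (Fin.rev i))
      = 1 / 2 * (x 0 ⬝ᵥ (1 - P - Sᵀ * S) *ᵥ x 0)
        + 1 / 2 * (x (Fin.last N) ⬝ᵥ (P + Sᵀ * S - 1) *ᵥ x (Fin.last N))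
        + ∑ n : Fin N, x n.succ ⬝ᵥ (S - Sᵀ) *ᵥ x n.castSucc := by
  set q : (Fin d → ℝ) → ℝ := fun v => v ⬝ᵥ (1 - Sᵀ * S) *ᵥ v
  have hrev : ∑ n : Fin N,
      (x n.succ.rev - S *ᵥ x n.castSucc.rev) ⬝ᵥ (x n.succ.rev - S *ᵥ x n.castSucc.rev)
      = ∑ n : Fin N, (x n.castSucc - S *ᵥ x n.succ) ⬝ᵥ (x n.castSucc - S *ᵥ x n.succ) :=
    Fintype.sum_equiv Fin.revPerm _ _ fun n => by simp [Fin.rev_succ, Fin.rev_castSucc]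
  have hsteps : ∑ n : Fin N,
      ((x n.castSucc - S *ᵥ x n.succ) ⬝ᵥ (x n.castSucc - S *ᵥ x n.succ)
        - (x n.succ - S *ᵥ x n.castSucc) ⬝ᵥ (x n.succ - S *ᵥ x n.castSucc))
      = q (x 0) - q (x (Fin.last N)) + 2 * ∑ n : Fin N, x n.succ ⬝ᵥ (S - Sᵀ) *ᵥ x n.castSucc := by
    rw [← Fin.sum_castSucc_sub_succ fun i => q (x i), Finset.mul_sum, ← Finset.sum_add_distrib]
    exact Finset.sum_congr rfl fun n _ => sub_mulVec_dotProduct_self_sub_swap S _ _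
  have h0 : x 0 ⬝ᵥ (1 - P - Sᵀ * S) *ᵥ x 0 = q (x 0) - x 0 ⬝ᵥ P *ᵥ x 0 := by
    simp only [q, sub_mulVec, dotProduct_sub]
    ring
  have hN : x (Fin.last N) ⬝ᵥ (P + Sᵀ * S - 1) *ᵥ x (Fin.last N)
      = x (Fin.last N) ⬝ᵥ P *ᵥ x (Fin.last N) - q (x (Fin.last N)) := by
    simp only [q, sub_mulVec, add_mulVec, dotProduct_sub, dotProduct_add]
    ring
  rw [Finset.sum_sub_distrib] at hsteps
  simp only [gaussMarkovExponent, Fin.rev_zero, hrev, h0, hN]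
  linarith

theorem gauss_markov_entropy_production_quadratic_form_general
    {d N : ℕ} (S So : Matrix (Fin d) (Fin d) ℝ)
    (μplus μminus : Measure (Fin (N + 1) → Fin d → ℝ))
    (hplus : μplus = volume.withDensity (fun x => ENNReal.ofReal
      ((Real.sqrt ((2 * Real.pi) ^ ((N + 1) * d) * So.det))⁻¹ *
        Real.exp (-(1 / 2) * (x 0 ⬝ᵥ So⁻¹.mulVec (x 0))
          - (1 / 2) * ∑ n : Fin N,
              (x n.succ - S.mulVec (x n.castSucc)) ⬝ᵥ
                (x n.succ - S.mulVec (x n.castSucc))))))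
    (hminus : μminus = μplus.map (fun x i => x (Fin.rev i))) :
    ∀ᵐ x ∂μplus,
      Real.log ((μplus.rnDeriv μminus x).toReal)
        = 1 / 2 * (x 0 ⬝ᵥ ((1 - So⁻¹ - Sᵀ * S).mulVec (x 0)))
          + 1 / 2 * (x (Fin.last N) ⬝ᵥ ((So⁻¹ + Sᵀ * S - 1).mulVec (x (Fin.last N))))
          + ∑ n : Fin N, x n.succ ⬝ᵥ ((S - Sᵀ).mulVec (x n.castSucc)) := by
  subst hminus hplus
  filter_upwards [log_rnDeriv_map_withDensity_ofReal_mul_exp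
    (volume_measurePreserving_comp_finRev (N + 1)) (fun x => by simp)
    (continuous_gaussMarkovExponent S So⁻¹).measurable _] with x hx
  exact hx.trans (gaussMarkovExponent_sub_rev S So⁻¹ x)

/-- For the centered Gauss–Markov chain with drift `S` and initial
covariance `Σₒ ≻ 0`, the log Radon–Nikodym derivative of the law `μ⁺` of
`(X₁,…,X_N)` with respect to the law `μ⁻` of `(X_N,…,X₁)` is the explicit
quadratic form (here the chain has length `N + 1`, covering every `N ≥ 1`;
index `0` is `X₁` and `Fin.last N` is `X_N`). -/
theorem gauss_markov_entropy_production_quadratic_form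
    {d N : ℕ} (S So : Matrix (Fin d) (Fin d) ℝ) (hSo : So.PosDef)
    (μplus μminus : Measure (Fin (N + 1) → Fin d → ℝ))
    (hplus : μplus = volume.withDensity (fun x => ENNReal.ofReal
      ((Real.sqrt ((2 * Real.pi) ^ ((N + 1) * d) * So.det))⁻¹ *
        Real.exp (-(1 / 2) * (x 0 ⬝ᵥ So⁻¹.mulVec (x 0))
          - (1 / 2) * ∑ n : Fin N,
              (x n.succ - S.mulVec (x n.castSucc)) ⬝ᵥ
                (x n.succ - S.mulVec (x n.castSucc))))))
    (hminus : μminus = μplus.map (fun x i => x (Fin.rev i))) :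
    ∀ᵐ x ∂μplus,
      Real.log ((μplus.rnDeriv μminus x).toReal)
        = 1 / 2 * (x 0 ⬝ᵥ ((1 - So⁻¹ - Sᵀ * S).mulVec (x 0)))
          + 1 / 2 * (x (Fin.last N) ⬝ᵥ ((So⁻¹ + Sᵀ * S - 1).mulVec (x (Fin.last N))))
          + ∑ n : Fin N, x n.succ ⬝ᵥ ((S - Sᵀ).mulVec (x n.castSucc)) :=
  gauss_markov_entropy_production_quadratic_form_general S So μplus μminus hplus hminus
end

section
/- Let Q_N be a Hermitian block tridiagonal quasi-Toeplitz matrix with blocks A, D, B, E as above, let T_N be its bulk (the N×N block Toeplitz part with diagonal D and off-diagonals E, E†). If the smallest eigenvalue of Q_N is at least q for some real q > 0, then the smallest eigenvalue of T_N is at least q (in particular T_N is invertible), and the smallest eigenvalue of the 2×2-block boundary matrix S_N := [[A − E†C†T_N⁻¹CE, −E†C†T_N⁻¹R†E†],[−E R T_N⁻¹ C E, B − E R T_N⁻¹ R† E†]] is at least q, where C = (I,0,…,0)ᵀ and R = (0,…,0,I). -/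
open Matrix

/-- The Hermitian block tridiagonal quasi-Toeplitz matrix `Q_N` with diagonal
blocks `A, D, …, D, B` and off-diagonal blocks `E`, `Eᴴ`. -/
def qtMatrix {d : ℕ} (N : ℕ) (A D B E : Matrix (Fin d) (Fin d) ℂ) :
    Matrix (Fin (N + 2) × Fin d) (Fin (N + 2) × Fin d) ℂ :=
  fun p q =>
    if (p.1 : ℕ) = (q.1 : ℕ) then
      (if (p.1 : ℕ) = 0 then A else if (p.1 : ℕ) = N + 1 then B else D) p.2 q.2
    else if (p.1 : ℕ) = (q.1 : ℕ) + 1 then E p.2 q.2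
    else if (q.1 : ℕ) = (p.1 : ℕ) + 1 then Eᴴ p.2 q.2
    else 0

/-- The `N×N` block tridiagonal Toeplitz bulk `T_N` with diagonal `D` and
off-diagonals `E`, `Eᴴ`. -/
def bulkMatrix {d : ℕ} (N : ℕ) (D E : Matrix (Fin d) (Fin d) ℂ) :
    Matrix (Fin N × Fin d) (Fin N × Fin d) ℂ :=
  fun p q =>
    if (p.1 : ℕ) = (q.1 : ℕ) then D p.2 q.2
    else if (p.1 : ℕ) = (q.1 : ℕ) + 1 then E p.2 q.2
    else if (q.1 : ℕ) = (p.1 : ℕ) + 1 then Eᴴ p.2 q.2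
    else 0

/-- `C = (I, 0, …, 0)ᵀ`. -/
def matC (d N : ℕ) : Matrix (Fin N × Fin d) (Fin d) ℂ :=
  fun p b => if (p.1 : ℕ) = 0 ∧ p.2 = b then 1 else 0

/-- `R = (0, …, 0, I)`. -/
def matR (d N : ℕ) : Matrix (Fin d) (Fin N × Fin d) ℂ :=
  fun a q => if (q.1 : ℕ) = N - 1 ∧ a = q.2 then 1 else 0

/-- The `2×2`-block boundary (Schur complement) matrix `S_N`. -/
noncomputable def boundaryMatrix {d : ℕ} (N : ℕ)
    (A D B E : Matrix (Fin d) (Fin d) ℂ) :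
    Matrix (Fin d ⊕ Fin d) (Fin d ⊕ Fin d) ℂ :=
  Matrix.fromBlocks
    (A - Eᴴ * (matC d N)ᴴ * (bulkMatrix N D E)⁻¹ * matC d N * E)
    (-(Eᴴ * (matC d N)ᴴ * (bulkMatrix N D E)⁻¹ * (matR d N)ᴴ * Eᴴ))
    (-(E * matR d N * (bulkMatrix N D E)⁻¹ * matC d N * E))
    (B - E * matR d N * (bulkMatrix N D E)⁻¹ * (matR d N)ᴴ * Eᴴ)

/-!
Ordering the blocks as boundary `0, N + 1` first and bulk `1, …, N` after writes `Q_N` as the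
block matrix `[[diag(A, B), U], [Uᴴ, T_N]]`, where `U` couples `A` to the first and `B` to the
last bulk block, and `S_N = diag(A, B) - U T_N⁻¹ Uᴴ` is its Schur complement. A lower bound `q`
on the Rayleigh quotient passes to the principal block `T_N` (test vectors vanishing on the
boundary), which makes `T_N` injective when `q > 0`. For the test vector `(w, -T_N⁻¹ Uᴴ w)` the
bottom block row of `Q_N` vanishes, so its quadratic form is that of `S_N` at `w`, while its norm
is at least that of `w`.
-/

namespace Matrix

variable {ι κ : Type*} [Fintype ι] [Fintype κ]

def RayleighBoundedBelow (M : Matrix ι ι ℂ) (q : ℝ) : Prop :=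
  ∀ z : ι → ℂ, q * (star z ⬝ᵥ z).re ≤ (star z ⬝ᵥ M *ᵥ z).re

open ComplexOrder in
lemma re_star_dotProduct_self_nonneg (z : ι → ℂ) : 0 ≤ (star z ⬝ᵥ z).re :=
  (Complex.nonneg_iff.mp (dotProduct_star_self_nonneg z)).1

open ComplexOrder in
lemma re_star_dotProduct_self_pos {z : ι → ℂ} (hz : z ≠ 0) : 0 < (star z ⬝ᵥ z).re :=
  (Complex.pos_iff.mp (dotProduct_star_self_pos_iff.mpr hz)).1

lemma RayleighBoundedBelow.submatrix_equiv {M : Matrix ι ι ℂ} {q : ℝ}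
    (h : M.RayleighBoundedBelow q) (e : κ ≃ ι) : (M.submatrix e e).RayleighBoundedBelow q := by
  intro z
  have hz := h (z ∘ e.symm)
  rwa [show star (z ∘ e.symm) = star z ∘ e.symm from rfl, comp_equiv_symm_dotProduct,
    comp_equiv_symm_dotProduct, ← submatrix_mulVec_equiv, Function.comp_assoc,
    Equiv.symm_comp_self, Function.comp_id] at hz

lemma RayleighBoundedBelow.isUnit [DecidableEq ι] {M : Matrix ι ι ℂ} {q : ℝ}
    (h : M.RayleighBoundedBelow q) (hq : 0 < q) : IsUnit M := by
  rw [isUnit_iff_isUnit_det, isUnit_iff_ne_zero]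
  intro hdet
  obtain ⟨v, hv, hMv⟩ := exists_mulVec_eq_zero_iff.mpr hdet
  have hle := h v
  rw [hMv, dotProduct_zero, Complex.zero_re] at hle
  have := mul_pos hq (re_star_dotProduct_self_pos hv)
  linarith

lemma star_sumElim_dotProduct_fromBlocks_mulVec_sumElim (P : Matrix ι ι ℂ)
    (U : Matrix ι κ ℂ) (V : Matrix κ ι ℂ) (T : Matrix κ κ ℂ) (w : ι → ℂ) (u : κ → ℂ) :
    star (Sum.elim w u) ⬝ᵥ fromBlocks P U V T *ᵥ Sum.elim w u =
      star w ⬝ᵥ (P *ᵥ w + U *ᵥ u) + star u ⬝ᵥ (V *ᵥ w + T *ᵥ u) := by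
  rw [fromBlocks_mulVec, Function.star_sumElim, sumElim_dotProduct_sumElim]
  simp only [Sum.elim_comp_inl, Sum.elim_comp_inr]

variable {P : Matrix ι ι ℂ} {U : Matrix ι κ ℂ} {V : Matrix κ ι ℂ} {T : Matrix κ κ ℂ} {q : ℝ}

lemma RayleighBoundedBelow.fromBlocks₂₂ (h : (fromBlocks P U V T).RayleighBoundedBelow q) :
    T.RayleighBoundedBelow q := by
  intro u
  have hu := h (Sum.elim 0 u)
  rwa [star_sumElim_dotProduct_fromBlocks_mulVec_sumElim, Function.star_sumElim,
    sumElim_dotProduct_sumElim, star_zero, zero_dotProduct, zero_dotProduct, zero_add,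
    mulVec_zero, zero_add, zero_add] at hu

lemma RayleighBoundedBelow.schurComplement [DecidableEq κ]
    (h : (fromBlocks P U V T).RayleighBoundedBelow q) (hq : 0 ≤ q) (hT : IsUnit T) :
    (P - U * T⁻¹ * V).RayleighBoundedBelow q := by
  intro w
  set u := -(T⁻¹ *ᵥ V *ᵥ w)
  have hTu : V *ᵥ w + T *ᵥ u = 0 := by
    rw [mulVec_neg, mulVec_mulVec, mul_nonsing_inv _ ((isUnit_iff_isUnit_det T).mp hT),
      one_mulVec, add_neg_cancel]
  have hw := h (Sum.elim w u)
  rw [star_sumElim_dotProduct_fromBlocks_mulVec_sumElim, hTu, dotProduct_zero, add_zero,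
    Function.star_sumElim, sumElim_dotProduct_sumElim, Complex.add_re] at hw
  calc q * (star w ⬝ᵥ w).re
      ≤ q * ((star w ⬝ᵥ w).re + (star u ⬝ᵥ u).re) := by
        have := re_star_dotProduct_self_nonneg u; gcongr; linarith
    _ ≤ _ := hw
    _ = _ := by
      rw [sub_mulVec, ← mulVec_mulVec, ← mulVec_mulVec, sub_eq_add_neg, mulVec_neg]

end Matrix

def qtIndex (d N : ℕ) : (Fin d ⊕ Fin d) ⊕ (Fin N × Fin d) → Fin (N + 2) × Fin d :=
  Sum.elim (Sum.elim (fun a => (0, a)) (fun a => (Fin.last (N + 1), a)))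
    (fun p => (p.1.succ.castSucc, p.2))

lemma qtIndex_bijective (d N : ℕ) : Function.Bijective (qtIndex d N) := by
  rw [Fintype.bijective_iff_injective_and_card]
  refine ⟨?_, by simp only [Fintype.card_sum, Fintype.card_fin, Fintype.card_prod]; ring⟩
  rintro ((a | a) | ⟨i, a⟩) ((b | b) | ⟨j, b⟩) h <;>
    simp only [qtIndex, Sum.elim_inl, Sum.elim_inr, Prod.mk.injEq, Fin.ext_iff, Fin.val_zero,
      Fin.val_last, Fin.val_castSucc, Fin.val_succ] at h <;> grind

lemma mul_conjTranspose_matC_apply {d N : ℕ} (X : Matrix (Fin d) (Fin d) ℂ) (a : Fin d)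
    (p : Fin N × Fin d) : (X * (matC d N)ᴴ) a p = if (p.1 : ℕ) = 0 then X a p.2 else 0 := by
  by_cases h : (p.1 : ℕ) = 0 <;> simp [mul_apply, matC, h, eq_comm]

lemma mul_matR_apply {d N : ℕ} (X : Matrix (Fin d) (Fin d) ℂ) (a : Fin d)
    (p : Fin N × Fin d) : (X * matR d N) a p = if (p.1 : ℕ) = N - 1 then X a p.2 else 0 := by
  by_cases h : (p.1 : ℕ) = N - 1 <;> simp [mul_apply, matR, h]

def boundaryCoupling {d : ℕ} (N : ℕ) (E : Matrix (Fin d) (Fin d) ℂ) :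
    Matrix (Fin d ⊕ Fin d) (Fin N × Fin d) ℂ :=
  fromRows (Eᴴ * (matC d N)ᴴ) (E * matR d N)

-- For `N = 0` the two boundary blocks are adjacent in `Q_N`, coupled directly by `E`.
lemma qtMatrix_submatrix_qtIndex {d N : ℕ} (hN : 1 ≤ N) (A D B E : Matrix (Fin d) (Fin d) ℂ) :
    (qtMatrix N A D B E).submatrix (qtIndex d N) (qtIndex d N) =
      fromBlocks (fromBlocks A 0 0 B) (boundaryCoupling N E) (boundaryCoupling N E)ᴴ
        (bulkMatrix N D E) := by
  obtain ⟨n, rfl⟩ : ∃ n, N = n + 1 := ⟨N - 1, by omega⟩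
  ext ((a | a) | ⟨i, a⟩) ((b | b) | ⟨j, b⟩) <;>
    simp only [submatrix_apply, qtIndex, Sum.elim_inl, Sum.elim_inr, qtMatrix, bulkMatrix,
      boundaryCoupling, fromBlocks_apply₁₁, fromBlocks_apply₁₂, fromBlocks_apply₂₁,
      fromBlocks_apply₂₂, fromRows_apply_inl, fromRows_apply_inr, conjTranspose_apply,
      mul_conjTranspose_matC_apply, mul_matR_apply, Matrix.zero_apply, Fin.val_zero,
      Fin.val_last, Fin.val_castSucc, Fin.val_succ] <;>
    grind [star_star, star_zero]

lemma boundaryMatrix_eq_sub {d : ℕ} (N : ℕ) (A D B E : Matrix (Fin d) (Fin d) ℂ) :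
    boundaryMatrix N A D B E = fromBlocks A 0 0 B -
      boundaryCoupling N E * (bulkMatrix N D E)⁻¹ * (boundaryCoupling N E)ᴴ := by
  rw [boundaryCoupling, conjTranspose_fromRows_eq_fromCols_conjTranspose, fromRows_mul,
    fromRows_mul_fromCols, sub_eq_add_neg, fromBlocks_neg, fromBlocks_add, boundaryMatrix]
  simp only [conjTranspose_mul, conjTranspose_conjTranspose, Matrix.mul_assoc, zero_add,
    sub_eq_add_neg]

theorem qtMatrix_rayleigh_lower_bound_bulk_boundary_general {d : ℕ} (N : ℕ) (hN : 1 ≤ N)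
    (A D B E : Matrix (Fin d) (Fin d) ℂ)
    (q : ℝ) (hq : 0 < q)
    (hQ : ∀ z : Fin (N + 2) × Fin d → ℂ,
      q * (star z ⬝ᵥ z).re ≤ (star z ⬝ᵥ (qtMatrix N A D B E).mulVec z).re) :
    (∀ z : Fin N × Fin d → ℂ,
      q * (star z ⬝ᵥ z).re ≤ (star z ⬝ᵥ (bulkMatrix N D E).mulVec z).re) ∧
    IsUnit (bulkMatrix N D E) ∧
    (∀ z : Fin d ⊕ Fin d → ℂ,
      q * (star z ⬝ᵥ z).re ≤ (star z ⬝ᵥ (boundaryMatrix N A D B E).mulVec z).re) := by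
  have hblocks : (fromBlocks (fromBlocks A 0 0 B) (boundaryCoupling N E)
      (boundaryCoupling N E)ᴴ (bulkMatrix N D E)).RayleighBoundedBelow q := by
    rw [← qtMatrix_submatrix_qtIndex hN]
    exact RayleighBoundedBelow.submatrix_equiv hQ (.ofBijective _ (qtIndex_bijective d N))
  have hbulk := hblocks.fromBlocks₂₂
  have hunit := hbulk.isUnit hq
  refine ⟨hbulk, hunit, ?_⟩
  rw [boundaryMatrix_eq_sub]
  exact hblocks.schurComplement hq.le hunit

/-- a positive lower bound `q` for the Rayleigh quotient of `Q_N`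
passes to the bulk matrix `T_N` (which is then invertible) and to the boundary
matrix `S_N`. -/
theorem qtMatrix_rayleigh_lower_bound_bulk_boundary {d : ℕ} (N : ℕ) (hN : 1 ≤ N)
    (A D B E : Matrix (Fin d) (Fin d) ℂ)
    (hA : A.IsHermitian) (hD : D.IsHermitian) (hB : B.IsHermitian)
    (q : ℝ) (hq : 0 < q)
    (hQ : ∀ z : Fin (N + 2) × Fin d → ℂ,
      q * (star z ⬝ᵥ z).re ≤ (star z ⬝ᵥ (qtMatrix N A D B E).mulVec z).re) :
    (∀ z : Fin N × Fin d → ℂ,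
      q * (star z ⬝ᵥ z).re ≤ (star z ⬝ᵥ (bulkMatrix N D E).mulVec z).re) ∧
    IsUnit (bulkMatrix N D E) ∧
    (∀ z : Fin d ⊕ Fin d → ℂ,
      q * (star z ⬝ᵥ z).re ≤ (star z ⬝ᵥ (boundaryMatrix N A D B E).mulVec z).re) :=
  qtMatrix_rayleigh_lower_bound_bulk_boundary_general N hN A D B E q hq hQ
end

section
/- Let T_N be the Hermitian block tridiagonal Toeplitz matrices with diagonal D and off-diagonals E, E†, and F(θ) := E e^{−iθ} + D + E† e^{iθ}. Then for a real number t: the smallest eigenvalue of T_N is ≥ t for all N ≥ 1 if and only if the smallest eigenvalue of the Hermitian matrix F(θ) is ≥ t for all θ ∈ [0,2π]. -/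
open Matrix

/-- The symbol `F(θ) = E e^{−iθ} + D + Eᴴ e^{iθ}` of the Toeplitz matrices. -/
noncomputable def symbolF {d : ℕ} (D E : Matrix (Fin d) (Fin d) ℂ) (θ : ℝ) :
    Matrix (Fin d) (Fin d) ℂ :=
  Complex.exp (-(θ : ℂ) * Complex.I) • E + D + Complex.exp ((θ : ℂ) * Complex.I) • Eᴴ

/-!
Writing `ẑ(θ) = ∑ₙ e^{-inθ} zₙ`, the blocks of `T_N` are the Fourier coefficients of `F`, so
`2π ⟨z, T_N z⟩ = ∫₀^{2π} ⟨ẑ(θ), F(θ) ẑ(θ)⟩ dθ` and `2π ‖z‖² = ∫₀^{2π} ‖ẑ(θ)‖² dθ`: integrating the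
bound on `F` gives the bound on every `T_N`. Conversely, the Bloch vector `zₙ = e^{inθ} v`,
`n < K + 1`, has `⟨z, T_{K+1} z⟩ = K ⟨v, F(θ) v⟩ + ⟨v, D v⟩` and `‖z‖² = (K + 1) ‖v‖²`, since only
the boundary blocks break translation invariance; dividing the bound on `T_{K+1}` by `K` and
letting `K → ∞` gives the bound on `F(θ)`.
-/

open Complex

lemma integral_exp_int_mul_I (k : ℤ) :
    ∫ θ in (0 : ℝ)..2 * Real.pi, exp (k * θ * I) = if k = 0 then 2 * Real.pi else 0 := by
  split_ifs with hk
  · simp [hk]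
  have hkI : (k : ℂ) * I ≠ 0 := by simp [hk]
  have hperiod : exp (k * I * ((2 * Real.pi : ℝ) : ℂ)) = 1 := by
    rw [← exp_int_mul_two_pi_mul_I k]; push_cast; ring_nf
  simp_rw [mul_right_comm _ _ I]
  rw [integral_exp_mul_complex hkI, hperiod]
  simp

lemma Function.curry_star {ι κ R : Type*} [Star R] (z : ι × κ → R) (m : ι) :
    Function.curry (star z) m = star (Function.curry z m) :=
  rfl

lemma Matrix.dotProduct_mulVec_prod {ι κ R : Type*} [Fintype ι] [Fintype κ]
    [NonUnitalNonAssocSemiring R] (M : Matrix (ι × κ) (ι × κ) R) (u w : ι × κ → R) :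
    u ⬝ᵥ M *ᵥ w = ∑ m, ∑ n,
      Function.curry u m ⬝ᵥ M.submatrix (Prod.mk m) (Prod.mk n) *ᵥ Function.curry w n := by
  simp only [dotProduct, mulVec, Fintype.sum_prod_type, Finset.mul_sum, submatrix_apply,
    Function.curry_apply]
  exact Finset.sum_congr rfl fun m _ => Finset.sum_comm

lemma sum_range_sum_range_sub_of_tridiagonal {M : Type*} [AddCommMonoid M] (g : ℤ → M)
    (hg : ∀ k, 1 < |k| → g k = 0) (K : ℕ) :
    ∑ m ∈ Finset.range (K + 1), ∑ n ∈ Finset.range (K + 1), g (m - n) =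
      K • (g 1 + g 0 + g (-1)) + g 0 := by
  induction K with
  | zero => simp
  | succ K ih =>
    have hcol : ∑ m ∈ Finset.range (K + 1), g (m - (K + 1 : ℕ)) = g (-1) := by
      rw [Finset.sum_range_succ, Finset.sum_eq_zero fun m hm => hg _ ?_]
      · push_cast; simp
      · rw [Finset.mem_range] at hm
        rw [lt_abs]; omega
    have hrow : ∑ n ∈ Finset.range (K + 1), g ((K + 1 : ℕ) - n) = g 1 := by
      rw [Finset.sum_range_succ, Finset.sum_eq_zero fun n hn => hg _ ?_]
      · push_cast; simp
      · rw [Finset.mem_range] at hn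
        rw [lt_abs]; omega
    rw [Finset.sum_range_succ _ (K + 1),
      Finset.sum_range_succ (fun n : ℕ => g ((K + 1 : ℕ) - n)), hrow]
    simp only [Finset.sum_range_succ _ (K + 1), Finset.sum_add_distrib, ih, hcol, sub_self,
      succ_nsmul]
    abel

lemma le_of_forall_nat_mul_add_le {a b c e : ℝ} (h : ∀ K : ℕ, K * a + b ≤ K * c + e) : a ≤ c := by
  by_contra! hlt
  obtain ⟨K, hK⟩ := exists_nat_gt ((e - b) / (a - c))
  rw [div_lt_iff₀ (sub_pos.2 hlt)] at hK
  linarith [h K]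

section Toeplitz

variable {d : ℕ} (D E : Matrix (Fin d) (Fin d) ℂ)

/-- `F(θ) = ∑ₖ bandBlock k e^{-ikθ}`, and the block `(m, n)` of `T_N` is `bandBlock (m - n)`. -/
def bandBlock (k : ℤ) : Matrix (Fin d) (Fin d) ℂ :=
  if k = 0 then D else if k = 1 then E else if k = -1 then Eᴴ else 0

lemma bulkMatrix_submatrix {N : ℕ} (m n : Fin N) :
    (bulkMatrix N D E).submatrix (Prod.mk m) (Prod.mk n) = bandBlock D E (m - n) := by
  ext j k
  simp only [submatrix_apply, bulkMatrix, bandBlock]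
  split_ifs <;> first | rfl | omega

lemma dotProduct_symbolF_mulVec (θ : ℝ) (u w : Fin d → ℂ) :
    u ⬝ᵥ symbolF D E θ *ᵥ w =
      exp (-θ * I) * (u ⬝ᵥ E *ᵥ w) + u ⬝ᵥ D *ᵥ w + exp (θ * I) * (u ⬝ᵥ Eᴴ *ᵥ w) := by
  simp [symbolF, add_mulVec, smul_mulVec, dotProduct_add, dotProduct_smul]

lemma symbolF_one_zero (θ : ℝ) : symbolF (1 : Matrix (Fin d) (Fin d) ℂ) 0 θ = 1 := by
  simp [symbolF]

lemma bulkMatrix_one_zero (N : ℕ) : bulkMatrix N (1 : Matrix (Fin d) (Fin d) ℂ) 0 = 1 := by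
  ext ⟨m, j⟩ ⟨n, k⟩
  simp only [bulkMatrix, one_apply, Prod.mk.injEq, Fin.val_inj]
  split_ifs <;> simp_all

lemma integral_exp_mul_dotProduct_symbolF_mulVec (k : ℤ) (u w : Fin d → ℂ) :
    ∫ θ in (0 : ℝ)..2 * Real.pi, exp (k * θ * I) * (u ⬝ᵥ symbolF D E θ *ᵥ w) =
      2 * Real.pi * (u ⬝ᵥ bandBlock D E k *ᵥ w) := by
  have hsplit : ∀ θ : ℝ, exp (k * θ * I) * (u ⬝ᵥ symbolF D E θ *ᵥ w) =
      exp (((k - 1 : ℤ) : ℂ) * θ * I) * (u ⬝ᵥ E *ᵥ w) + exp (k * θ * I) * (u ⬝ᵥ D *ᵥ w) +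
        exp (((k + 1 : ℤ) : ℂ) * θ * I) * (u ⬝ᵥ Eᴴ *ᵥ w) := by
    intro θ
    rw [dotProduct_symbolF_mulVec]
    push_cast
    simp only [add_mul, one_mul, sub_eq_add_neg, exp_add, neg_mul]
    ring
  have hint : ∀ (j : ℤ) (c : ℂ), IntervalIntegrable (fun θ : ℝ => exp (j * θ * I) * c)
      MeasureTheory.volume 0 (2 * Real.pi) :=
    fun j c => (by fun_prop : Continuous fun θ : ℝ => exp (j * θ * I) * c).intervalIntegrable _ _
  simp_rw [hsplit]
  rw [intervalIntegral.integral_add ((hint _ _).add (hint _ _)) (hint _ _),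
    intervalIntegral.integral_add (hint _ _) (hint _ _), intervalIntegral.integral_mul_const,
    intervalIntegral.integral_mul_const, intervalIntegral.integral_mul_const,
    integral_exp_int_mul_I, integral_exp_int_mul_I, integral_exp_int_mul_I, bandBlock]
  split_ifs <;> first | omega | simp

noncomputable def fourierVec {N : ℕ} (z : Fin N × Fin d → ℂ) (θ : ℝ) : Fin d → ℂ :=
  ∑ m : Fin N, exp (-(m * θ * I)) • Function.curry z m

lemma star_fourierVec_dotProduct_mulVec {N : ℕ} (M : Matrix (Fin d) (Fin d) ℂ)
    (z : Fin N × Fin d → ℂ) (θ : ℝ) :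
    star (fourierVec z θ) ⬝ᵥ M *ᵥ fourierVec z θ =
      ∑ m : Fin N, ∑ n : Fin N, exp (((m - n : ℤ) : ℂ) * θ * I) *
        (star (Function.curry z m) ⬝ᵥ M *ᵥ Function.curry z n) := by
  have hconj : ∀ m : ℕ, star (exp (-(m * θ * I))) = exp (m * θ * I) := by
    intro m
    rw [Complex.star_def, ← exp_conj]
    simp [conj_ofReal]
  simp only [fourierVec, star_sum, star_smul, mulVec_sum, mulVec_smul, sum_dotProduct,
    dotProduct_sum, smul_dotProduct, dotProduct_smul, smul_eq_mul, hconj, Finset.mul_sum]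
  rw [Finset.sum_comm]
  refine Finset.sum_congr rfl fun m _ => Finset.sum_congr rfl fun n _ => ?_
  rw [← mul_assoc, ← exp_add]
  push_cast
  ring_nf

lemma integral_star_fourierVec_dotProduct_symbolF_mulVec {N : ℕ} (z : Fin N × Fin d → ℂ) :
    ∫ θ in (0 : ℝ)..2 * Real.pi,
        star (fourierVec z θ) ⬝ᵥ symbolF D E θ *ᵥ fourierVec z θ =
      2 * Real.pi * (star z ⬝ᵥ bulkMatrix N D E *ᵥ z) := by
  have hcont : ∀ (j : ℤ) (u w : Fin d → ℂ),
      Continuous fun θ : ℝ => exp (j * θ * I) * (u ⬝ᵥ symbolF D E θ *ᵥ w) := by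
    intro j u w
    simp only [dotProduct_symbolF_mulVec]
    fun_prop
  simp only [star_fourierVec_dotProduct_mulVec]
  rw [intervalIntegral.integral_finsetSum fun m _ =>
    (continuous_finsetSum _ fun n _ => hcont _ _ _).intervalIntegrable _ _]
  simp only [intervalIntegral.integral_finsetSum fun n _ => (hcont _ _ _).intervalIntegrable _ _,
    integral_exp_mul_dotProduct_symbolF_mulVec, dotProduct_mulVec_prod, ← bulkMatrix_submatrix,
    Function.curry_star, Finset.mul_sum]

lemma integral_re_star_fourierVec_dotProduct_symbolF_mulVec {N : ℕ} (z : Fin N × Fin d → ℂ) :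
    ∫ θ in (0 : ℝ)..2 * Real.pi,
        (star (fourierVec z θ) ⬝ᵥ symbolF D E θ *ᵥ fourierVec z θ).re =
      2 * Real.pi * (star z ⬝ᵥ bulkMatrix N D E *ᵥ z).re := by
  have hcont : Continuous fun θ => star (fourierVec z θ) ⬝ᵥ symbolF D E θ *ᵥ fourierVec z θ := by
    simp only [fourierVec, symbolF]
    fun_prop
  have hre := intervalIntegral.intervalIntegral_re
    (hcont.intervalIntegrable (μ := MeasureTheory.volume) 0 (2 * Real.pi))
  simp only [RCLike.re_to_complex] at hre
  rw [hre, integral_star_fourierVec_dotProduct_symbolF_mulVec]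
  simp

lemma integral_re_star_fourierVec_dotProduct {N : ℕ} (z : Fin N × Fin d → ℂ) :
    ∫ θ in (0 : ℝ)..2 * Real.pi, (star (fourierVec z θ) ⬝ᵥ fourierVec z θ).re =
      2 * Real.pi * (star z ⬝ᵥ z).re := by
  simpa [symbolF_one_zero, bulkMatrix_one_zero] using
    integral_re_star_fourierVec_dotProduct_symbolF_mulVec 1 0 z

lemma bulk_bound_of_symbol_bound {t : ℝ}
    (h : ∀ θ ∈ Set.Icc (0 : ℝ) (2 * Real.pi), ∀ v : Fin d → ℂ,
      t * (star v ⬝ᵥ v).re ≤ (star v ⬝ᵥ symbolF D E θ *ᵥ v).re)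
    {N : ℕ} (z : Fin N × Fin d → ℂ) :
    t * (star z ⬝ᵥ z).re ≤ (star z ⬝ᵥ bulkMatrix N D E *ᵥ z).re := by
  have hmono := intervalIntegral.integral_mono_on (μ := MeasureTheory.volume) Real.two_pi_pos.le
    (Continuous.intervalIntegrable (by simp only [fourierVec]; fun_prop) _ _)
    (Continuous.intervalIntegrable (by simp only [fourierVec, symbolF]; fun_prop) _ _)
    fun θ hθ => h θ hθ (fourierVec z θ)
  rw [intervalIntegral.integral_const_mul, integral_re_star_fourierVec_dotProduct,
    integral_re_star_fourierVec_dotProduct_symbolF_mulVec, mul_left_comm] at hmono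
  exact le_of_mul_le_mul_left hmono Real.two_pi_pos

noncomputable def blochVec (N : ℕ) (θ : ℝ) (v : Fin d → ℂ) : Fin N × Fin d → ℂ :=
  fun p => exp ((p.1 : ℕ) * θ * I) * v p.2

lemma star_blochVec_dotProduct_mulVec {N : ℕ} (θ : ℝ) (v : Fin d → ℂ)
    (M : Matrix (Fin d) (Fin d) ℂ) (m n : Fin N) :
    star (Function.curry (blochVec N θ v) m) ⬝ᵥ M *ᵥ Function.curry (blochVec N θ v) n =
      exp (-(((m - n : ℤ) : ℂ) * θ * I)) * (star v ⬝ᵥ M *ᵥ v) := by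
  have hcurry : ∀ k : Fin N, Function.curry (blochVec N θ v) k = exp ((k : ℕ) * θ * I) • v :=
    fun k => rfl
  have hconj : star (exp ((m : ℕ) * θ * I)) = exp (-((m : ℕ) * θ * I)) := by
    rw [Complex.star_def, ← exp_conj]
    simp [conj_ofReal]
  rw [hcurry, hcurry, star_smul, mulVec_smul, smul_dotProduct, dotProduct_smul, hconj,
    smul_eq_mul, smul_eq_mul, ← mul_assoc, ← exp_add]
  push_cast
  ring_nf

lemma star_blochVec_dotProduct_bulkMatrix_mulVec (K : ℕ) (θ : ℝ) (v : Fin d → ℂ) :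
    star (blochVec (K + 1) θ v) ⬝ᵥ bulkMatrix (K + 1) D E *ᵥ blochVec (K + 1) θ v =
      K * (star v ⬝ᵥ symbolF D E θ *ᵥ v) + star v ⬝ᵥ D *ᵥ v := by
  set g : ℤ → ℂ := fun k => exp (-(k * θ * I)) * (star v ⬝ᵥ bandBlock D E k *ᵥ v) with hg_def
  have hg : ∀ k, 1 < |k| → g k = 0 := by
    intro k hk
    have : k ≠ 0 ∧ k ≠ 1 ∧ k ≠ -1 := by rw [lt_abs] at hk; omega
    simp [hg_def, bandBlock, this]
  have hsymbol : star v ⬝ᵥ symbolF D E θ *ᵥ v = g 1 + g 0 + g (-1) := by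
    simp [hg_def, bandBlock, dotProduct_symbolF_mulVec]
  have hD : g 0 = star v ⬝ᵥ D *ᵥ v := by simp [hg_def, bandBlock]
  rw [dotProduct_mulVec_prod]
  simp only [Function.curry_star, bulkMatrix_submatrix, star_blochVec_dotProduct_mulVec]
  change ∑ m : Fin (K + 1), ∑ n : Fin (K + 1), g (m - n) = _
  simp only [fun m : ℕ => Fin.sum_univ_eq_sum_range (fun n => g (m - n))]
  rw [Fin.sum_univ_eq_sum_range (fun m => ∑ n ∈ Finset.range (K + 1), g (m - n)),
    sum_range_sum_range_sub_of_tridiagonal g hg, hsymbol, hD, nsmul_eq_mul]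

lemma star_blochVec_dotProduct (K : ℕ) (θ : ℝ) (v : Fin d → ℂ) :
    star (blochVec (K + 1) θ v) ⬝ᵥ blochVec (K + 1) θ v = (K + 1) * (star v ⬝ᵥ v) := by
  simpa [bulkMatrix_one_zero, symbolF_one_zero, add_one_mul] using
    star_blochVec_dotProduct_bulkMatrix_mulVec 1 0 K θ v

lemma symbol_bound_of_bulk_bound {t : ℝ}
    (h : ∀ N : ℕ, 1 ≤ N → ∀ z : Fin N × Fin d → ℂ,
      t * (star z ⬝ᵥ z).re ≤ (star z ⬝ᵥ bulkMatrix N D E *ᵥ z).re)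
    (θ : ℝ) (v : Fin d → ℂ) :
    t * (star v ⬝ᵥ v).re ≤ (star v ⬝ᵥ symbolF D E θ *ᵥ v).re := by
  refine le_of_forall_nat_mul_add_le (b := t * (star v ⬝ᵥ v).re) (e := (star v ⬝ᵥ D *ᵥ v).re)
    fun K => ?_
  have hK := h (K + 1) K.succ_pos (blochVec (K + 1) θ v)
  rw [star_blochVec_dotProduct, star_blochVec_dotProduct_bulkMatrix_mulVec] at hK
  simp only [add_re, add_im, mul_re, natCast_re, natCast_im, one_re, one_im, add_zero, zero_mul,
    sub_zero] at hK
  linarith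

end Toeplitz

theorem bulk_rayleigh_bound_iff_symbol_bound_general {d : ℕ}
    (D E : Matrix (Fin d) (Fin d) ℂ) (t : ℝ) :
    (∀ N : ℕ, 1 ≤ N → ∀ z : Fin N × Fin d → ℂ,
      t * (star z ⬝ᵥ z).re ≤ (star z ⬝ᵥ (bulkMatrix N D E).mulVec z).re) ↔
    (∀ θ ∈ Set.Icc (0 : ℝ) (2 * Real.pi), ∀ z : Fin d → ℂ,
      t * (star z ⬝ᵥ z).re ≤ (star z ⬝ᵥ (symbolF D E θ).mulVec z).re) :=
  ⟨fun h θ _ => symbol_bound_of_bulk_bound D E h θ,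
    fun h _ _ => bulk_bound_of_symbol_bound D E h⟩

/-- the smallest eigenvalue of `T_N` is `≥ t` for all `N ≥ 1` iff
the smallest eigenvalue of the symbol `F(θ)` is `≥ t` for all `θ ∈ [0,2π]`. -/
theorem bulk_rayleigh_bound_iff_symbol_bound {d : ℕ}
    (D E : Matrix (Fin d) (Fin d) ℂ) (hD : D.IsHermitian) (t : ℝ) :
    (∀ N : ℕ, 1 ≤ N → ∀ z : Fin N × Fin d → ℂ,
      t * (star z ⬝ᵥ z).re ≤ (star z ⬝ᵥ (bulkMatrix N D E).mulVec z).re) ↔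
    (∀ θ ∈ Set.Icc (0 : ℝ) (2 * Real.pi), ∀ z : Fin d → ℂ,
      t * (star z ⬝ᵥ z).re ≤ (star z ⬝ᵥ (symbolF D E θ).mulVec z).re) :=
  bulk_rayleigh_bound_iff_symbol_bound_general D E t
end

section
/- Let S ∈ ℝ^{d×d} have spectral radius ρ(S) < 1, and let Σₒ ∈ ℝ^{d×d} be symmetric positive definite. For N ≥ 1 let Σ_N⁻¹ be the symmetric block tridiagonal matrix with diagonal blocks Σₒ⁻¹ + SᵀS, I + SᵀS (repeated N times), I, and off-diagonal blocks −S, −Sᵀ. Then there exists σ > 0 (independent of N) such that the smallest eigenvalue of Σ_N⁻¹ is at least σ for all N ≥ 1; one may take σ = min(1, λ_min(Σₒ⁻¹))·(1−s)²/c², where ‖Sⁿ‖ ≤ c sⁿ for all n ≥ 0 with some s ∈ (0,1) and c > 0. -/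
open Matrix

/-- The block tridiagonal precision matrix `Σ_N⁻¹` of `(X₁,…,X_{N+2})` for the
Gauss–Markov chain with drift `S` and initial precision `SoInv = Σₒ⁻¹`:
diagonal blocks `Σₒ⁻¹ + SᵀS, I + SᵀS, …, I + SᵀS, I`, off-diagonal blocks
`−S`, `−Sᵀ`. -/
def precisionMatrix {d : ℕ} (N : ℕ) (S SoInv : Matrix (Fin d) (Fin d) ℝ) :
    Matrix (Fin (N + 2) × Fin d) (Fin (N + 2) × Fin d) ℝ :=
  fun p q =>
    if (p.1 : ℕ) = (q.1 : ℕ) then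
      (if (p.1 : ℕ) = 0 then SoInv + Sᵀ * S
       else if (p.1 : ℕ) = N + 1 then 1
       else 1 + Sᵀ * S) p.2 q.2
    else if (p.1 : ℕ) = (q.1 : ℕ) + 1 then (-S) p.2 q.2
    else if (q.1 : ℕ) = (p.1 : ℕ) + 1 then (-Sᵀ) p.2 q.2
    else 0

/-! Write `w₀ = z₀` and `wₙ₊₁ = zₙ₊₁ - S zₙ` for the innovations of the block vector `z`.
The quadratic form of `Σ_N⁻¹` is `⟨w₀, Σₒ⁻¹ w₀⟩ + ∑ ‖wₙ₊₁‖²`, hence at least `min 1 mo · ∑ ‖wₙ‖²`.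
Conversely `zₙ = ∑_{k ≤ n} S^(n-k) w_k`, so `(‖zₙ‖)` is dominated by the convolution of
`(‖wₙ‖)` with the kernel `(c sʲ)`, whose `ℓ¹`-norm is at most `c / (1 - s)`; Young's inequality
gives `∑ ‖zₙ‖² ≤ (c / (1 - s))² ∑ ‖wₙ‖²`. -/

open Finset

theorem sum_sq_conv_le_of_sum_le {a w : ℕ → ℝ} {A : ℝ} (ha : ∀ j, 0 ≤ a j)
    (hA : ∀ m, ∑ j ∈ range m, a j ≤ A) (m : ℕ) :
    ∑ n ∈ range m, (∑ k ∈ range (n + 1), a (n - k) * w k) ^ 2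
      ≤ A ^ 2 * ∑ k ∈ range m, w k ^ 2 := by
  have hA0 : 0 ≤ A := by simpa using hA 0
  have hpoint : ∀ n, (∑ k ∈ range (n + 1), a (n - k) * w k) ^ 2
      ≤ A * ∑ k ∈ range (n + 1), w k ^ 2 * a (n - k) := by
    intro n
    -- weighted Cauchy–Schwarz with weights `a (n - k)`
    refine (sum_sq_le_sum_mul_sum_of_sq_le_mul _ (fun k _ => ha (n - k))
      (fun k _ => mul_nonneg (sq_nonneg (w k)) (ha (n - k))) fun k _ => le_of_eq (by ring)).trans ?_
    gcongr
    · exact sum_nonneg fun k _ => mul_nonneg (sq_nonneg (w k)) (ha (n - k))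
    · have hrefl : ∑ k ∈ range (n + 1), a (n - k) = ∑ j ∈ range (n + 1), a j := by
        simpa using sum_range_reflect a (n + 1)
      exact hrefl ▸ hA (n + 1)
  calc ∑ n ∈ range m, (∑ k ∈ range (n + 1), a (n - k) * w k) ^ 2
      ≤ ∑ n ∈ range m, A * ∑ k ∈ range (n + 1), w k ^ 2 * a (n - k) :=
        sum_le_sum fun n _ => hpoint n
    _ = A * ∑ k ∈ range m, w k ^ 2 * ∑ j ∈ range (m - k), a j := by
      rw [← mul_sum, sum_range_diag_flip m fun k j => w k ^ 2 * a j]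
      simp only [mul_sum]
    _ ≤ A * ∑ k ∈ range m, w k ^ 2 * A := by
      gcongr with k; exact hA _
    _ = A ^ 2 * ∑ k ∈ range m, w k ^ 2 := by rw [← sum_mul]; ring

theorem sum_range_mul_pow_le {c s : ℝ} (hc : 0 ≤ c) (hs0 : 0 ≤ s) (hs1 : s < 1) (m : ℕ) :
    ∑ j ∈ range m, c * s ^ j ≤ c * (1 - s)⁻¹ := by
  have hgeom := geom_sum_Ico_le_of_lt_one (x := s) (m := 0) (n := m) hs0 hs1
  rw [← range_eq_Ico, pow_zero, one_div] at hgeom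
  rw [← mul_sum]
  exact mul_le_mul_of_nonneg_left hgeom hc

section Innovation

variable {E : Type*} [NormedAddCommGroup E] [NormedSpace ℝ E]

def innovation (L : E →L[ℝ] E) (x : ℕ → E) : ℕ → E
  | 0 => x 0
  | n + 1 => x (n + 1) - L (x n)

variable (L : E →L[ℝ] E) (x : ℕ → E)

theorem eq_sum_pow_apply_innovation (n : ℕ) :
    x n = ∑ k ∈ range (n + 1), (L ^ (n - k)) (innovation L x k) := by
  induction n with
  | zero => simp [innovation]
  | succ n ih =>
    rw [sum_range_succ, Nat.sub_self, pow_zero, one_apply_eq_self]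
    have hshift : ∑ k ∈ range (n + 1), (L ^ (n + 1 - k)) (innovation L x k) = L (x n) := by
      rw [ih, map_sum]
      refine sum_congr rfl fun k hk => ?_
      rw [Nat.sub_add_comm (Nat.le_of_lt_succ (mem_range.mp hk)), pow_succ', mul_apply_eq_comp]
    rw [hshift, innovation, add_sub_cancel]

theorem norm_le_sum_mul_norm_innovation {a : ℕ → ℝ} (hL : ∀ j, ‖L ^ j‖ ≤ a j) (n : ℕ) :
    ‖x n‖ ≤ ∑ k ∈ range (n + 1), a (n - k) * ‖innovation L x k‖ := by
  rw [eq_sum_pow_apply_innovation L x n]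
  exact (norm_sum_le _ _).trans (sum_le_sum fun k _ => (L ^ (n - k)).le_of_opNorm_le (hL _) _)

theorem sum_norm_sq_le_sum_norm_sq_innovation {a : ℕ → ℝ} {A : ℝ} (hL : ∀ j, ‖L ^ j‖ ≤ a j)
    (hA : ∀ m, ∑ j ∈ range m, a j ≤ A) (m : ℕ) :
    ∑ n ∈ range m, ‖x n‖ ^ 2 ≤ A ^ 2 * ∑ k ∈ range m, ‖innovation L x k‖ ^ 2 := by
  refine (sum_le_sum fun n _ => ?_).trans
    (sum_sq_conv_le_of_sum_le (fun j => (norm_nonneg _).trans (hL j)) hA m)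
  exact pow_le_pow_left₀ (norm_nonneg _) (norm_le_sum_mul_norm_innovation L x hL n) 2

end Innovation

theorem EuclideanSpace.norm_toLp_sq {ι : Type*} [Fintype ι] (v : ι → ℝ) :
    ‖WithLp.toLp 2 v‖ ^ 2 = v ⬝ᵥ v := by
  rw [← real_inner_self_eq_norm_sq, EuclideanSpace.inner_toLp_toLp, star_trivial]

section Blocks

variable {R κ : Type*} {m : ℕ}

def blockSeq [Zero R] (z : Fin m × κ → R) (n : ℕ) : κ → R :=
  fun i => if h : n < m then z (⟨n, h⟩, i) else 0

theorem blockSeq_coe [Zero R] (z : Fin m × κ → R) (a : Fin m) :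
    blockSeq z a = fun i => z (a, i) := by
  funext i; simp [blockSeq, a.isLt]

variable [CommSemiring R] [Fintype κ]

theorem dotProduct_eq_sum_blockSeq (x y : Fin m × κ → R) :
    x ⬝ᵥ y = ∑ n ∈ range m, blockSeq x n ⬝ᵥ blockSeq y n := by
  rw [← Fin.sum_univ_eq_sum_range (fun n => blockSeq x n ⬝ᵥ blockSeq y n)]
  simp only [dotProduct, Fintype.sum_prod_type, blockSeq_coe]

theorem dotProduct_mulVec_eq_sum_blockSeq (M : Matrix (Fin m × κ) (Fin m × κ) R)
    (B : ℕ → ℕ → Matrix κ κ R) (hB : ∀ a b i j, M (a, i) (b, j) = B a b i j)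
    (x y : Fin m × κ → R) :
    x ⬝ᵥ M *ᵥ y = ∑ a ∈ range m, ∑ b ∈ range m, blockSeq x a ⬝ᵥ B a b *ᵥ blockSeq y b := by
  rw [← Fin.sum_univ_eq_sum_range]
  simp_rw [← Fin.sum_univ_eq_sum_range (fun b => blockSeq x _ ⬝ᵥ B _ b *ᵥ blockSeq y b)]
  simp only [dotProduct, mulVec, Fintype.sum_prod_type, blockSeq_coe, hB, mul_sum]
  rw [sum_congr rfl fun a _ => sum_comm]

end Blocks

theorem sum_range_sum_range_ite_eq_add_one {M : Type*} [AddCommMonoid M] (n : ℕ) (f : ℕ → M) :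
    ∑ a ∈ range (n + 1), ∑ b ∈ range (n + 1), (if a = b + 1 then f b else 0) =
      ∑ b ∈ range n, f b := by
  rw [sum_comm]
  simp only [sum_ite_eq', mem_range, Nat.add_lt_add_iff_right, sum_range_succ, lt_irrefl,
    if_false, add_zero]
  exact sum_congr rfl fun b hb => if_pos (mem_range.mp hb)

section Tridiagonal

variable {R κ : Type*} [CommRing R] [Fintype κ] [DecidableEq κ]
  (N : ℕ) (S P : Matrix κ κ R) (x : ℕ → κ → R)

def precisionBlock (a b : ℕ) : Matrix κ κ R :=
  if a = b then (if a = 0 then P + Sᵀ * S else if a = N + 1 then 1 else 1 + Sᵀ * S)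
  else if a = b + 1 then -S
  else if b = a + 1 then -Sᵀ
  else 0

theorem dotProduct_precisionBlock_mulVec (a b : ℕ) :
    x a ⬝ᵥ precisionBlock N S P a b *ᵥ x b =
      (if a = b then x a ⬝ᵥ precisionBlock N S P a a *ᵥ x a else 0)
        + (if a = b + 1 then -(x (b + 1) ⬝ᵥ S *ᵥ x b) else 0)
        + (if b = a + 1 then -(x (a + 1) ⬝ᵥ S *ᵥ x a) else 0) := by
  unfold precisionBlock
  split_ifs <;> subst_vars <;>
    first | omega | simp [neg_mulVec, dotProduct_mulVec, vecMul_transpose, dotProduct_comm]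

theorem sum_range_dotProduct_precisionBlock_mulVec_self :
    ∑ a ∈ range (N + 2), x a ⬝ᵥ precisionBlock N S P a a *ᵥ x a =
      x 0 ⬝ᵥ P *ᵥ x 0 +
        ∑ n ∈ range (N + 1), (S *ᵥ x n ⬝ᵥ S *ᵥ x n + x (n + 1) ⬝ᵥ x (n + 1)) := by
  have hSS : ∀ v, v ⬝ᵥ (Sᵀ * S) *ᵥ v = S *ᵥ v ⬝ᵥ S *ᵥ v := fun v => by
    rw [← mulVec_mulVec, dotProduct_mulVec, vecMul_transpose]
  have hmid : ∀ n ∈ range N, x (n + 1) ⬝ᵥ precisionBlock N S P (n + 1) (n + 1) *ᵥ x (n + 1) =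
      S *ᵥ x (n + 1) ⬝ᵥ S *ᵥ x (n + 1) + x (n + 1) ⬝ᵥ x (n + 1) := fun n hn => by
    rw [precisionBlock, if_pos rfl, if_neg n.succ_ne_zero,
      if_neg (by simp only [mem_range] at hn; omega), add_mulVec, dotProduct_add, one_mulVec,
      hSS, add_comm]
  rw [sum_range_succ', sum_range_succ, sum_congr rfl hmid, sum_add_distrib, sum_add_distrib,
    sum_range_succ' (fun n => S *ᵥ x n ⬝ᵥ S *ᵥ x n),
    sum_range_succ (fun n => x (n + 1) ⬝ᵥ x (n + 1))]
  simp only [precisionBlock, if_true, Nat.add_one_ne_zero, if_false, add_mulVec, dotProduct_add,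
    hSS, one_mulVec]
  ring

theorem sum_dotProduct_precisionBlock_mulVec :
    ∑ a ∈ range (N + 2), ∑ b ∈ range (N + 2), x a ⬝ᵥ precisionBlock N S P a b *ᵥ x b =
      x 0 ⬝ᵥ P *ᵥ x 0 +
        ∑ n ∈ range (N + 1), (x (n + 1) - S *ᵥ x n) ⬝ᵥ (x (n + 1) - S *ᵥ x n) := by
  have hdiag : ∀ a ∈ range (N + 2), ∑ b ∈ range (N + 2),
      (if a = b then x a ⬝ᵥ precisionBlock N S P a a *ᵥ x a else 0) =
        x a ⬝ᵥ precisionBlock N S P a a *ᵥ x a := fun a ha => by rw [sum_ite_eq, if_pos ha]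
  rw [sum_congr rfl fun a _ => sum_congr rfl fun b _ =>
    dotProduct_precisionBlock_mulVec N S P x a b]
  simp only [sum_add_distrib]
  rw [sum_congr rfl hdiag, sum_comm (f := fun a b => if b = a + 1 then _ else 0),
    sum_range_sum_range_ite_eq_add_one, sum_range_dotProduct_precisionBlock_mulVec_self,
    add_assoc, ← sum_add_distrib, add_assoc, ← sum_add_distrib]
  congr 1
  exact sum_congr rfl fun n _ => by
    simp only [sub_dotProduct, dotProduct_sub, dotProduct_comm (S *ᵥ x n) (x (n + 1))]
    ring

end Tridiagonal

theorem precisionMatrix_apply {d : ℕ} (N : ℕ) (S P : Matrix (Fin d) (Fin d) ℝ)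
    (a b : Fin (N + 2)) (i j : Fin d) :
    precisionMatrix N S P (a, i) (b, j) = precisionBlock N S P a b i j := by
  unfold precisionMatrix precisionBlock
  split_ifs <;> rfl

theorem dotProduct_precisionMatrix_mulVec {d : ℕ} (N : ℕ) (S P : Matrix (Fin d) (Fin d) ℝ)
    (z : Fin (N + 2) × Fin d → ℝ) :
    z ⬝ᵥ precisionMatrix N S P *ᵥ z =
      blockSeq z 0 ⬝ᵥ P *ᵥ blockSeq z 0 +
        ∑ n ∈ range (N + 1), ‖WithLp.toLp 2 (blockSeq z (n + 1) - S *ᵥ blockSeq z n)‖ ^ 2 := by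
  simp only [EuclideanSpace.norm_toLp_sq]
  rw [dotProduct_mulVec_eq_sum_blockSeq _ _ (precisionMatrix_apply N S P),
    sum_dotProduct_precisionBlock_mulVec]

theorem precisionMatrix_uniform_rayleigh_lower_bound_general {d : ℕ}
    (S So : Matrix (Fin d) (Fin d) ℝ)
    (c s : ℝ) (hs0 : 0 < s) (hs1 : s < 1) (hc : 0 < c)
    (hSn : ∀ n : ℕ, ‖Matrix.toEuclideanCLM (𝕜 := ℝ) (S ^ n)‖ ≤ c * s ^ n)
    (mo : ℝ) (hmo : 0 < mo)
    (hmSo : ∀ z : Fin d → ℝ, mo * (z ⬝ᵥ z) ≤ z ⬝ᵥ So⁻¹.mulVec z) :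
    0 < min 1 mo * (1 - s) ^ 2 / c ^ 2 ∧
    ∀ N : ℕ, 1 ≤ N → ∀ z : Fin (N + 2) × Fin d → ℝ,
      (min 1 mo * (1 - s) ^ 2 / c ^ 2) * (z ⬝ᵥ z)
        ≤ z ⬝ᵥ (precisionMatrix N S So⁻¹).mulVec z := by
  have hs : 0 < 1 - s := sub_pos.mpr hs1
  have hm : 0 < min 1 mo := lt_min one_pos hmo
  refine ⟨by positivity, fun N _ z => ?_⟩
  set L := toEuclideanCLM (𝕜 := ℝ) S
  set x : ℕ → EuclideanSpace ℝ (Fin d) := fun n => WithLp.toLp 2 (blockSeq z n)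
  set I := ∑ k ∈ range (N + 2), ‖innovation L x k‖ ^ 2
  have hzz : z ⬝ᵥ z = ∑ n ∈ range (N + 2), ‖x n‖ ^ 2 := by
    simp only [x, EuclideanSpace.norm_toLp_sq, dotProduct_eq_sum_blockSeq]
  have hquad : min 1 mo * I ≤ z ⬝ᵥ precisionMatrix N S So⁻¹ *ᵥ z := by
    have hinnov : ∀ n, innovation L x (n + 1) =
        WithLp.toLp 2 (blockSeq z (n + 1) - S *ᵥ blockSeq z n) := fun n => rfl
    rw [dotProduct_precisionMatrix_mulVec, mul_sum, sum_range_succ', add_comm]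
    simp only [hinnov]
    gcongr with n
    · calc min 1 mo * ‖innovation L x 0‖ ^ 2 ≤ mo * ‖innovation L x 0‖ ^ 2 := by
            gcongr; exact min_le_right _ _
        _ ≤ _ := by rw [innovation, EuclideanSpace.norm_toLp_sq]; exact hmSo _
    · exact mul_le_of_le_one_left (sq_nonneg _) (min_le_left _ _)
  have hyoung : ∑ n ∈ range (N + 2), ‖x n‖ ^ 2 ≤ (c * (1 - s)⁻¹) ^ 2 * I := by
    refine sum_norm_sq_le_sum_norm_sq_innovation L x (a := fun j => c * s ^ j)
      (fun j => by simpa [L, ← map_pow] using hSn j) (sum_range_mul_pow_le hc.le hs0.le hs1) _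
  calc min 1 mo * (1 - s) ^ 2 / c ^ 2 * (z ⬝ᵥ z)
      = min 1 mo * ((1 - s) ^ 2 / c ^ 2 * ∑ n ∈ range (N + 2), ‖x n‖ ^ 2) := by rw [hzz]; ring
    _ ≤ min 1 mo * ((1 - s) ^ 2 / c ^ 2 * ((c * (1 - s)⁻¹) ^ 2 * I)) := by gcongr
    _ = min 1 mo * I := by field_simp
    _ ≤ z ⬝ᵥ precisionMatrix N S So⁻¹ *ᵥ z := hquad

/-- uniform positive lower bound on the smallest eigenvalue of the
precision matrices `Σ_N⁻¹`, with
`σ = min(1, λ_min(Σₒ⁻¹))·(1−s)²/c²` where `‖Sⁿ‖ ≤ c sⁿ`. -/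
theorem precisionMatrix_uniform_rayleigh_lower_bound {d : ℕ}
    (S So : Matrix (Fin d) (Fin d) ℝ)
    (hρ : spectralRadius ℝ S < 1) (hSo : So.PosDef)
    (c s : ℝ) (hs0 : 0 < s) (hs1 : s < 1) (hc : 0 < c)
    (hSn : ∀ n : ℕ, ‖Matrix.toEuclideanCLM (𝕜 := ℝ) (S ^ n)‖ ≤ c * s ^ n)
    (mo : ℝ) (hmo : 0 < mo)
    (hmSo : ∀ z : Fin d → ℝ, mo * (z ⬝ᵥ z) ≤ z ⬝ᵥ So⁻¹.mulVec z) :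
    0 < min 1 mo * (1 - s) ^ 2 / c ^ 2 ∧
    ∀ N : ℕ, 1 ≤ N → ∀ z : Fin (N + 2) × Fin d → ℝ,
      (min 1 mo * (1 - s) ^ 2 / c ^ 2) * (z ⬝ᵥ z)
        ≤ z ⬝ᵥ (precisionMatrix N S So⁻¹).mulVec z :=
  precisionMatrix_uniform_rayleigh_lower_bound_general S So c s hs0 hs1 hc hSn mo hmo hmSo
end

section
/- Let Σₛ ≻ 0 and Σₒ ≻ 0 be d×d real symmetric matrices with Σₒ ≠ Σₛ, and let Δ := (Σₛ − Σₒ)(Σₛ + Σₒ)⁻¹. Then ρ(Δ) > 0, and for real λ, (λ+1)Σₒ⁻¹ − λΣₛ⁻¹ ≻ 0 and (λ+1)Σₛ⁻¹ − λΣₒ⁻¹ ≻ 0 hold simultaneously if and only if |2λ + 1| ρ(Δ) < 1. -/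
open Matrix

section Aux

variable {n : Type*} [Fintype n] [DecidableEq n]

private lemma posDef_add' {A B : Matrix n n ℝ} (hA : A.PosDef) (hB : B.PosDef) :
    (A + B).PosDef :=
  hA.add hB

private lemma posDef_smul' {A : Matrix n n ℝ} (hA : A.PosDef) {c : ℝ} (hc : 0 < c) :
    (c • A).PosDef :=
  hA.smul hc

private lemma posDef_conj' {A : Matrix n n ℝ} (hA : IsUnit A.det) {M : Matrix n n ℝ}
    (hM : M.PosDef) : (A * M * Aᴴ).PosDef := by
  refine .of_dotProduct_mulVec_pos (isHermitian_mul_mul_conjTranspose A hM.1) fun x hx => ?_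
  have hy : Aᴴ *ᵥ x ≠ 0 := by
    have hU : IsUnit Aᴴ := (Matrix.isUnit_iff_isUnit_det _).mpr (by
      rw [Matrix.det_conjTranspose]; exact hA.star)
    have hinj := Matrix.mulVec_injective_iff_isUnit.mpr hU
    intro h
    exact hx (hinj (by rw [h, Matrix.mulVec_zero]))
  have key : star x ⬝ᵥ (A * M * Aᴴ) *ᵥ x = star (Aᴴ *ᵥ x) ⬝ᵥ M *ᵥ (Aᴴ *ᵥ x) := by
    rw [star_mulVec, conjTranspose_conjTranspose, ← Matrix.mulVec_mulVec,
      ← Matrix.mulVec_mulVec, Matrix.dotProduct_mulVec (star x) A]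
  rw [key]
  exact hM.dotProduct_mulVec_pos hy

private lemma posDef_conj_iff' {A : Matrix n n ℝ} (hA : IsUnit A.det) {M : Matrix n n ℝ} :
    (A * M * Aᴴ).PosDef ↔ M.PosDef := by
  refine ⟨fun h => ?_, posDef_conj' hA⟩
  have hAH : IsUnit Aᴴ.det := by rw [Matrix.det_conjTranspose]; exact hA.star
  have hAinv : IsUnit (A⁻¹).det := by
    rw [Matrix.det_nonsing_inv]
    exact hA.ringInverse
  have := posDef_conj' hAinv h
  have e : A⁻¹ * (A * M * Aᴴ) * (A⁻¹)ᴴ = M := by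
    rw [Matrix.conjTranspose_nonsing_inv, ← Matrix.mul_assoc, ← Matrix.mul_assoc,
      Matrix.nonsing_inv_mul A hA, Matrix.one_mul, Matrix.mul_assoc,
      Matrix.mul_nonsing_inv _ hAH, Matrix.mul_one]
  rwa [e] at this

end Aux

/-- For symmetric positive definite `Σₛ ≠ Σₒ` and
`Δ = (Σₛ − Σₒ)(Σₛ + Σₒ)⁻¹`, the spectral radius of `Δ` is positive and
`(λ+1)Σₒ⁻¹ − λΣₛ⁻¹ ≻ 0` together with `(λ+1)Σₛ⁻¹ − λΣₒ⁻¹ ≻ 0` holds iff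
`|2λ+1| ρ(Δ) < 1`. -/
theorem entropy_production_domain_symmetric_case
    {d : ℕ} (Ss So : Matrix (Fin d) (Fin d) ℝ)
    (hSs : Ss.PosDef) (hSo : So.PosDef) (hne : So ≠ Ss) :
    0 < spectralRadius ℝ ((Ss - So) * (Ss + So)⁻¹) ∧
    ∀ lam : ℝ,
      (((lam + 1) • So⁻¹ - lam • Ss⁻¹).PosDef ∧
        ((lam + 1) • Ss⁻¹ - lam • So⁻¹).PosDef) ↔
      ENNReal.ofReal |2 * lam + 1| * spectralRadius ℝ ((Ss - So) * (Ss + So)⁻¹) < 1 := by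
  -- basic invertibility facts
  have hdSs : IsUnit Ss.det := isUnit_iff_ne_zero.mpr hSs.det_pos.ne'
  have hdSo : IsUnit So.det := isUnit_iff_ne_zero.mpr hSo.det_pos.ne'
  have hSum : (Ss + So).PosDef := posDef_add' hSs hSo
  have hdSum : IsUnit (Ss + So).det := isUnit_iff_ne_zero.mpr hSum.det_pos.ne'
  -- nonempty index type
  have hd : 0 < d := by
    rcases Nat.eq_zero_or_pos d with h | h
    · subst h; exact absurd (Subsingleton.elim So Ss) hne
    · exact h
  haveI : Nonempty (Fin d) := Fin.pos_iff_nonempty.mp hd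
  -- the matrices E, F, Q, D
  set E : Matrix (Fin d) (Fin d) ℝ := So⁻¹ - Ss⁻¹ with hEdef
  set F : Matrix (Fin d) (Fin d) ℝ := So⁻¹ + Ss⁻¹ with hFdef
  have hFpos : F.PosDef := posDef_add' hSo.inv hSs.inv
  have hdF : IsUnit F.det := isUnit_iff_ne_zero.mpr hFpos.det_pos.ne'
  set Q : Matrix (Fin d) (Fin d) ℝ := (1 / 2 : ℝ) • F with hQdef
  set D : Matrix (Fin d) (Fin d) ℝ := (1 / 2 : ℝ) • E with hDdef
  have hQpos : Q.PosDef := posDef_smul' hFpos (by norm_num)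
  have hdQ : IsUnit Q.det := isUnit_iff_ne_zero.mpr hQpos.det_pos.ne'
  -- the square root A of Q
  set A : Matrix (Fin d) (Fin d) ℝ := (open scoped MatrixOrder in CFC.sqrt Q) with hAdef
  have hAA : A * A = Q := by open scoped MatrixOrder in exact CFC.sqrt_mul_sqrt_self Q hQpos.posSemidef.nonneg
  have hAH : Aᴴ = A := by open scoped MatrixOrder in exact (CFC.sqrt_nonneg Q).posSemidef.1
  have hdA : IsUnit A.det := by
    have h : A.det * A.det = Q.det := by rw [← Matrix.det_mul, hAA]
    refine isUnit_iff_ne_zero.mpr fun h0 => ?_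
    rw [h0, mul_zero] at h
    exact hQpos.det_pos.ne' h.symm
  have hAunit : IsUnit A := (Matrix.isUnit_iff_isUnit_det A).mpr hdA
  -- B
  set B : Matrix (Fin d) (Fin d) ℝ := A⁻¹ * D * A⁻¹ with hBdef
  have hDh : D.IsHermitian := by
    have h1 : (So⁻¹).IsHermitian := hSo.inv.1
    have h2 : (Ss⁻¹).IsHermitian := hSs.inv.1
    rw [hDdef, Matrix.IsHermitian, conjTranspose_smul, hEdef, conjTranspose_sub, h1.eq, h2.eq]
    simp
  have hABA : A * B * A = D := by
    rw [hBdef]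
    simp only [← Matrix.mul_assoc]
    rw [Matrix.mul_nonsing_inv A hdA, Matrix.one_mul, Matrix.mul_assoc,
      Matrix.nonsing_inv_mul A hdA, Matrix.mul_one]
  have hBh : B.IsHermitian := by
    have hAinvH : (A⁻¹)ᴴ = A⁻¹ := by rw [Matrix.conjTranspose_nonsing_inv, hAH]
    rw [Matrix.IsHermitian, hBdef, conjTranspose_mul, conjTranspose_mul, hAinvH, hDh.eq,
      Matrix.mul_assoc]
  -- spectrum of B equals spectrum of Δ
  set Δ : Matrix (Fin d) (Fin d) ℝ := (Ss - So) * (Ss + So)⁻¹ with hΔdef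
  have hQinv : Q⁻¹ = A⁻¹ * A⁻¹ := by rw [← hAA, Matrix.mul_inv_rev]
  have hspecBQ : spectrum ℝ B = spectrum ℝ (D * Q⁻¹) := by
    have e : B = (↑hAunit.unit⁻¹ : Matrix (Fin d) (Fin d) ℝ) * (D * Q⁻¹) * (↑hAunit.unit : Matrix (Fin d) (Fin d) ℝ) := by
      rw [Matrix.coe_units_inv, IsUnit.unit_spec]
      rw [hBdef, hQinv]
      simp only [← Matrix.mul_assoc]
      rw [Matrix.mul_assoc (A⁻¹ * D * A⁻¹) A⁻¹ A, Matrix.nonsing_inv_mul A hdA,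
        Matrix.mul_one]
    rw [e, spectrum.units_conjugate']
  have hE' : E = Ss⁻¹ * (Ss - So) * So⁻¹ := by
    rw [hEdef, Matrix.mul_sub, Matrix.sub_mul, Matrix.nonsing_inv_mul Ss hdSs, Matrix.one_mul,
      Matrix.mul_assoc, Matrix.mul_nonsing_inv So hdSo, Matrix.mul_one]
  have hF' : F = Ss⁻¹ * (Ss + So) * So⁻¹ := by
    rw [hFdef, Matrix.mul_add, Matrix.add_mul, Matrix.nonsing_inv_mul Ss hdSs, Matrix.one_mul,
      Matrix.mul_assoc, Matrix.mul_nonsing_inv So hdSo, Matrix.mul_one]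
  have hFinv : F⁻¹ = So * (Ss + So)⁻¹ * Ss := by
    rw [hF']
    apply Matrix.inv_eq_right_inv
    simp only [← Matrix.mul_assoc]
    rw [Matrix.mul_assoc (Ss⁻¹ * (Ss + So)) So⁻¹ So, Matrix.nonsing_inv_mul So hdSo,
      Matrix.mul_one, Matrix.mul_assoc Ss⁻¹ (Ss + So) (Ss + So)⁻¹,
      Matrix.mul_nonsing_inv _ hdSum, Matrix.mul_one, Matrix.nonsing_inv_mul Ss hdSs]
  have hQinvF : Q⁻¹ = (2 : ℝ) • F⁻¹ := by
    rw [hQdef]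
    apply Matrix.inv_eq_right_inv
    rw [Matrix.smul_mul, Matrix.mul_smul, Matrix.mul_nonsing_inv F hdF, smul_smul]
    norm_num
  have hDQ : D * Q⁻¹ = E * F⁻¹ := by
    rw [hQinvF, hDdef, Matrix.smul_mul, Matrix.mul_smul, smul_smul]
    norm_num
  have hSsunit : IsUnit Ss := (Matrix.isUnit_iff_isUnit_det Ss).mpr hdSs
  have hEF : E * F⁻¹ = Ss⁻¹ * Δ * Ss := by
    rw [hE', hFinv, hΔdef]
    simp only [← Matrix.mul_assoc]
    rw [Matrix.mul_assoc (Ss⁻¹ * (Ss - So)) So⁻¹ So, Matrix.nonsing_inv_mul So hdSo,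
      Matrix.mul_one]
  have hspecΔ : spectrum ℝ Δ = spectrum ℝ B := by
    rw [hspecBQ, hDQ, hEF]
    have e : Ss⁻¹ * Δ * Ss = (↑hSsunit.unit⁻¹ : Matrix (Fin d) (Fin d) ℝ) * Δ * (↑hSsunit.unit : Matrix (Fin d) (Fin d) ℝ) := by
      rw [Matrix.coe_units_inv, IsUnit.unit_spec]
    rw [e, spectrum.units_conjugate']
  -- eigenvalues of B
  set ev : Fin d → ℝ := hBh.eigenvalues with hevdef
  have hspec : spectrum ℝ Δ = Set.range ev := by
    rw [hspecΔ, hBh.spectrum_real_eq_range_eigenvalues]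
  obtain ⟨i₀, hmax⟩ := Finite.exists_max (fun i => |ev i|)
  have hsr : spectralRadius ℝ Δ = (‖ev i₀‖₊ : ENNReal) := by
    have h1 : spectralRadius ℝ Δ = ⨆ i, (‖ev i‖₊ : ENNReal) := by
      simp only [spectralRadius, hspec, iSup_range]
    rw [h1]
    refine le_antisymm (iSup_le fun i => ?_) (le_iSup (fun i => ((‖ev i‖₊ : ENNReal))) i₀)
    rw [ENNReal.coe_le_coe, ← NNReal.coe_le_coe, coe_nnnorm, coe_nnnorm,
      Real.norm_eq_abs, Real.norm_eq_abs]
    exact hmax i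
  -- the unitary U
  set U : Matrix (Fin d) (Fin d) ℝ := (hBh.eigenvectorUnitary : Matrix (Fin d) (Fin d) ℝ)
    with hUdef
  have hUU : U * star U = 1 := Matrix.mem_unitaryGroup_iff.mp hBh.eigenvectorUnitary.2
  have hdU : IsUnit U.det := by
    refine IsUnit.of_mul_eq_one (a := U.det) (star U).det ?_
    rw [← Matrix.det_mul, hUU, Matrix.det_one]
  have hBst : B = U * Matrix.diagonal ev * star U := by
    have := hBh.spectral_theorem
    rwa [RCLike.ofReal_real_eq_id, Function.id_comp] at this
  -- B is nonzero
  have hEne : E ≠ 0 := by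
    intro h
    apply hne
    have h1 : So⁻¹ = Ss⁻¹ := by rwa [hEdef, sub_eq_zero] at h
    calc So = (So⁻¹)⁻¹ := (Matrix.nonsing_inv_nonsing_inv So hdSo).symm
      _ = (Ss⁻¹)⁻¹ := by rw [h1]
      _ = Ss := Matrix.nonsing_inv_nonsing_inv Ss hdSs
  have hev0 : ev i₀ ≠ 0 := by
    intro h0
    apply hEne
    have hall : ∀ i, ev i = 0 := by
      intro i
      have h := hmax i
      rw [h0, abs_zero] at h
      exact abs_eq_zero.mp (le_antisymm h (abs_nonneg _))
    have hB0 : B = 0 := by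
      rw [hBst, show Matrix.diagonal ev = 0 by
        rw [show ev = fun _ => (0:ℝ) from funext hall]; simp]
      simp
    have hD0 : D = 0 := by rw [← hABA, hB0]; simp
    have : E = (2 : ℝ) • D := by rw [hDdef, smul_smul]; norm_num
    rw [this, hD0, smul_zero]
  -- key equivalence
  have key : ∀ t : ℝ, (Q + t • D).PosDef ↔ ∀ i, 0 < 1 + t * ev i := by
    intro t
    have e1 : A * ((1 : Matrix (Fin d) (Fin d) ℝ) + t • B) * A = Q + t • D := by
      rw [Matrix.mul_add, Matrix.mul_one, Matrix.add_mul, hAA, Matrix.mul_smul,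
        Matrix.smul_mul, hABA]
    have e2 : (1 : Matrix (Fin d) (Fin d) ℝ) + t • B
        = U * Matrix.diagonal (fun i => 1 + t * ev i) * star U := by
      have h1 : (1 : Matrix (Fin d) (Fin d) ℝ) = U * 1 * star U := by
        rw [Matrix.mul_one, hUU]
      have h2 : t • B = U * (t • Matrix.diagonal ev) * star U := by
        rw [Matrix.mul_smul, Matrix.smul_mul, ← hBst]
      have hdg : (1 : Matrix (Fin d) (Fin d) ℝ) + t • Matrix.diagonal ev
          = Matrix.diagonal (fun i => 1 + t * ev i) := by
        rw [← Matrix.diagonal_one, ← Matrix.diagonal_smul, Matrix.diagonal_add]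
        rfl
      rw [h1, h2, ← Matrix.add_mul, ← Matrix.mul_add, hdg]
    have c1 : (A * ((1 : Matrix (Fin d) (Fin d) ℝ) + t • B) * Aᴴ).PosDef
        ↔ ((1 : Matrix (Fin d) (Fin d) ℝ) + t • B).PosDef := posDef_conj_iff' hdA
    rw [hAH] at c1
    have c2 : (U * Matrix.diagonal (fun i => 1 + t * ev i) * Uᴴ).PosDef
        ↔ (Matrix.diagonal (fun i => 1 + t * ev i)).PosDef := posDef_conj_iff' hdU
    rw [← Matrix.star_eq_conjTranspose] at c2
    rw [← e1, c1, e2, c2, Matrix.posDef_diagonal_iff]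
  constructor
  · rw [hsr]
    exact ENNReal.coe_pos.mpr (nnnorm_pos.mpr hev0)
  · intro lam
    set c : ℝ := 2 * lam + 1 with hcdef
    have hm1 : (lam + 1) • So⁻¹ - lam • Ss⁻¹ = Q + c • D := by
      rw [hQdef, hDdef, hEdef, hFdef, hcdef]
      module
    have hm2 : (lam + 1) • Ss⁻¹ - lam • So⁻¹ = Q + (-c) • D := by
      rw [hQdef, hDdef, hEdef, hFdef, hcdef]
      module
    rw [hm1, hm2, key c, key (-c), hsr]
    have hrhs : (ENNReal.ofReal |c| * (‖ev i₀‖₊ : ENNReal) < 1) ↔ |c| * |ev i₀| < 1 := by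
      rw [← enorm_eq_nnnorm, Real.enorm_eq_ofReal_abs, ← ENNReal.ofReal_mul (abs_nonneg c),
        ← ENNReal.ofReal_one, ENNReal.ofReal_lt_ofReal_iff one_pos]
    rw [hrhs]
    constructor
    · rintro ⟨h1, h2⟩
      have ha := h1 i₀
      have hb := h2 i₀
      rw [← abs_mul]
      rw [abs_lt]
      constructor <;> nlinarith [ha, hb]
    · intro h
      have hi : ∀ i, |c * ev i| < 1 := by
        intro i
        calc |c * ev i| = |c| * |ev i| := abs_mul _ _
          _ ≤ |c| * |ev i₀| := mul_le_mul_of_nonneg_left (hmax i) (abs_nonneg c)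
          _ < 1 := h
      constructor <;> intro i <;> have := abs_lt.mp (hi i)
      · linarith [this.1]
      · have : -1 < -(c * ev i) ∧ -(c * ev i) < 1 := by
          constructor <;> linarith [this.1, this.2]
        nlinarith [this.1, this.2]
end

section
/- Let Y₁, …, Y_m be independent standard Gaussian random variables on a probability space, let a₁,…,a_m be real numbers with Σ|a_l| ≤ 1, and fix ε > 0. Then there exists p > 0, depending only on ε (not on m or on the a_l), such that P[|Σ_{l=1}^m a_l(Y_l² − 1)| < ε] ≥ p. -/
/-!
Split the weights at a threshold `δ`. At most `1 / δ` of them exceed `δ`, and with probability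
at least `μ(|Z| < t) ^ ⌈1 / δ⌉` all the corresponding `Z_l` are smaller than `t`, which makes
their contribution smaller than `ε / 2`. The remaining terms form a centred sum of variance at most
`δ · Var Z · ∑ |a_l| ≤ δ · Var Z`, so by Chebyshev it is smaller than `ε / 2` with probability at
least `1 / 2` once `δ` is small. The two groups of variables are independent, so the two
probabilities multiply. For `Z = Y² - 1` with `Y` standard Gaussian, `Z` is centred, square
integrable, and charges every neighbourhood of `0`.
-/

open MeasureTheory ProbabilityTheory Finset
open scoped NNReal

lemma Finset.card_filter_lt_mul_le_sum {ι : Type*} (s : Finset ι) {f : ι → ℝ}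
    (hf : ∀ l ∈ s, 0 ≤ f l) (δ : ℝ) : (#{l ∈ s | δ < f l} : ℝ) * δ ≤ ∑ l ∈ s, f l :=
  calc (#{l ∈ s | δ < f l} : ℝ) * δ = ∑ _l ∈ s with δ < f _l, δ := by
        rw [sum_const, nsmul_eq_mul]
    _ ≤ ∑ l ∈ s with δ < f l, f l := sum_le_sum fun l hl => (mem_filter.1 hl).2.le
    _ ≤ ∑ l ∈ s, f l := sum_le_sum_of_subset_of_nonneg (filter_subset _ _) fun l hl _ => hf l hl

lemma abs_sum_mul_lt_of_abs_lt {ι : Type*} [Fintype ι] [DecidableEq ι] {a z : ι → ℝ}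
    {S : Finset ι} {K : ℕ} {t c : ℝ} (ha : ∀ l, |a l| ≤ 1) (hS : #S ≤ K) (ht : 0 ≤ t)
    (hz : ∀ l ∈ S, |z l| < t) (hc : |∑ l ∈ Sᶜ, a l * z l| < c) :
    |∑ l, a l * z l| < K * t + c := by
  have hbig : |∑ l ∈ S, a l * z l| ≤ K * t :=
    calc |∑ l ∈ S, a l * z l| ≤ ∑ l ∈ S, |a l| * |z l| := by
          simpa only [abs_mul] using abs_sum_le_sum_abs (fun l => a l * z l) S
      _ ≤ ∑ _l ∈ S, t := sum_le_sum fun l hl =>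
          (mul_le_of_le_one_left (abs_nonneg _) (ha l)).trans (hz l hl).le
      _ = #S * t := by rw [sum_const, nsmul_eq_mul]
      _ ≤ K * t := by gcongr
  rw [← sum_add_sum_compl S]
  exact (abs_add_le _ _).trans_lt (add_lt_add_of_le_of_lt hbig hc)

section WeightedSum

variable {Ω ι : Type*} [MeasurableSpace Ω] {P : Measure Ω} {Z : ι → Ω → ℝ} {s : Finset ι}
  {a : ι → ℝ} {δ v : ℝ}

lemma variance_sum_mul_le (hind : Pairwise fun i j => Z i ⟂ᵢ[P] Z j)
    (hZ : ∀ l, MemLp (Z l) 2 P) (hv : ∀ l, Var[Z l; P] ≤ v) (ha : ∀ l ∈ s, |a l| ≤ δ) :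
    Var[fun ω => ∑ l ∈ s, a l * Z l ω; P] ≤ δ * v * ∑ l ∈ s, |a l| := by
  have hsum := IndepFun.variance_sum (X := fun l ω => a l * Z l ω) (s := s)
    (fun l _ => (hZ l).const_mul (a l))
    (fun i _ j _ hij => (hind hij).comp (measurable_const_mul (a i)) (measurable_const_mul (a j)))
  rw [sum_fn] at hsum
  rw [hsum, mul_sum]
  refine sum_le_sum fun l hl => ?_
  have hal := ha l hl
  rw [variance_const_mul, ← sq_abs]
  calc |a l| ^ 2 * Var[Z l; P] ≤ |a l| * δ * Var[Z l; P] := by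
        rw [sq]; gcongr; exact variance_nonneg _ _
    _ ≤ |a l| * δ * v :=
        mul_le_mul_of_nonneg_left (hv l) (mul_nonneg (abs_nonneg _) ((abs_nonneg _).trans hal))
    _ = δ * v * |a l| := by ring

lemma measure_le_abs_sum_mul_le [IsFiniteMeasure P] (hind : Pairwise fun i j => Z i ⟂ᵢ[P] Z j)
    (hZ : ∀ l, MemLp (Z l) 2 P) (hmean : ∀ l, P[Z l] = 0) (hv : ∀ l, Var[Z l; P] ≤ v)
    (ha : ∀ l ∈ s, |a l| ≤ δ) {c : ℝ} (hc : 0 < c) :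
    P {ω | c ≤ |∑ l ∈ s, a l * Z l ω|} ≤ ENNReal.ofReal ((δ * v * ∑ l ∈ s, |a l|) / c ^ 2) := by
  have hT : MemLp (fun ω => ∑ l ∈ s, a l * Z l ω) 2 P :=
    memLp_finsetSum s fun l _ => (hZ l).const_mul (a l)
  have hmeanT : P[fun ω => ∑ l ∈ s, a l * Z l ω] = 0 := by
    rw [integral_finsetSum s fun l _ => ((hZ l).const_mul (a l)).integrable one_le_two]
    simp [integral_const_mul, hmean]
  calc P {ω | c ≤ |∑ l ∈ s, a l * Z l ω|}
      = P {ω | c ≤ |∑ l ∈ s, a l * Z l ω - P[fun ω => ∑ l ∈ s, a l * Z l ω]|} := by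
        simp only [hmeanT, sub_zero]
    _ ≤ ENNReal.ofReal (Var[fun ω => ∑ l ∈ s, a l * Z l ω; P] / c ^ 2) :=
        meas_ge_le_variance_div_sq hT hc
    _ ≤ _ := ENNReal.ofReal_le_ofReal <|
        div_le_div_of_nonneg_right (variance_sum_mul_le hind hZ hv ha) (sq_nonneg c)

lemma ProbabilityTheory.iIndepFun.measure_biInter_inter_sum_mul_eq_mul (hind : iIndepFun Z P)
    (hZm : ∀ l, Measurable (Z l)) {S T : Finset ι} (hST : Disjoint S T) {B C : Set ℝ}
    (hB : MeasurableSet B) (hC : MeasurableSet C) (a : ι → ℝ) :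
    P ((⋂ l ∈ S, Z l ⁻¹' B) ∩ {ω | ∑ l ∈ T, a l * Z l ω ∈ C})
      = P (⋂ l ∈ S, Z l ⁻¹' B) * P {ω | ∑ l ∈ T, a l * Z l ω ∈ C} := by
  have h := (hind.indepFun_finset S T hST hZm).measure_inter_preimage_eq_mul
    (Set.univ.pi fun _ => B) {y : T → ℝ | ∑ i : T, a i * y i ∈ C}
    (MeasurableSet.univ_pi fun _ => hB) (hC.preimage (by fun_prop))
  have hS : (fun ω (i : S) => Z i ω) ⁻¹' Set.univ.pi (fun _ => B) = ⋂ l ∈ S, Z l ⁻¹' B := by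
    ext ω; simp
  have hT : (fun ω (i : T) => Z i ω) ⁻¹' {y : T → ℝ | ∑ i : T, a i * y i ∈ C}
      = {ω | ∑ l ∈ T, a l * Z l ω ∈ C} := by
    ext ω; simp only [Set.mem_preimage, Set.mem_ofPred_eq, sum_coe_sort T fun l => a l * Z l ω]
  rwa [hS, hT] at h

end WeightedSum

section IdenticallyDistributed

variable {Ω ι : Type*} [MeasurableSpace Ω] {P : Measure Ω} [IsProbabilityMeasure P] [Fintype ι]
  {Z : ι → Ω → ℝ} {μ : Measure ℝ} [IsProbabilityMeasure μ]

lemma measure_abs_lt_pow_mul_le_measure_abs_sum_mul_lt (hZm : ∀ l, Measurable (Z l))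
    (hlaw : ∀ l, P.map (Z l) = μ) (hind : iIndepFun Z P) (hμ : MemLp id 2 μ)
    (hmean : ∫ x, x ∂μ = 0) {a : ι → ℝ} (ha : ∑ l, |a l| ≤ 1) {δ : ℝ} (hδ : 0 < δ) {K : ℕ}
    (hK : 1 ≤ K * δ) {t c : ℝ} (ht : 0 ≤ t) (hc : 0 < c) :
    μ {x | |x| < t} ^ K * (1 - ENNReal.ofReal (δ * Var[id; μ] / c ^ 2))
      ≤ P {ω | |∑ l, a l * Z l ω| < K * t + c} := by
  classical
  have hid : ∀ l, IdentDistrib (Z l) id P μ := fun l =>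
    ⟨(hZm l).aemeasurable, aemeasurable_id, by rw [hlaw l, Measure.map_id]⟩
  have ha1 : ∀ l, |a l| ≤ 1 := fun l =>
    (single_le_sum (fun l _ => abs_nonneg (a l)) (mem_univ l)).trans ha
  set S : Finset ι := {l | δ < |a l|}
  have hS : #S ≤ K := by
    have := (card_filter_lt_mul_le_sum univ (fun l _ => abs_nonneg (a l)) δ).trans (ha.trans hK)
    exact_mod_cast le_of_mul_le_mul_right this hδ
  have hball : MeasurableSet {x : ℝ | |x| < t} := measurableSet_lt (by fun_prop) measurable_const
  have hbig : P (⋂ l ∈ S, Z l ⁻¹' {x | |x| < t}) = μ {x | |x| < t} ^ #S := by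
    rw [hind.meas_biInter fun l _ => ⟨_, hball, rfl⟩]
    simp_rw [← Measure.map_apply (hZm _) hball, hlaw, prod_const]
  have hsmall : 1 - ENNReal.ofReal (δ * Var[id; μ] / c ^ 2)
      ≤ P {ω | ∑ l ∈ Sᶜ, a l * Z l ω ∈ {x | |x| < c}} := by
    have hcheb := measure_le_abs_sum_mul_le (s := Sᶜ) (fun _ _ hij => hind.indepFun hij)
      (fun l => ((hid l).memLp_iff).2 hμ) (fun l => (hid l).integral_eq.trans hmean)
      (fun l => (hid l).variance_eq.le) (fun l hl => by simpa [S] using hl) hc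
    have hsum : ∑ l ∈ Sᶜ, |a l| ≤ 1 :=
      (sum_le_sum_of_subset_of_nonneg (subset_univ _) fun l _ _ => abs_nonneg (a l)).trans ha
    have hcompl : {ω | ∑ l ∈ Sᶜ, a l * Z l ω ∈ {x | |x| < c}}
        = {ω | c ≤ |∑ l ∈ Sᶜ, a l * Z l ω|}ᶜ := by
      ext ω; simp
    rw [hcompl, prob_compl_eq_one_sub (measurableSet_le measurable_const (by fun_prop))]
    refine tsub_le_tsub_left (hcheb.trans (ENNReal.ofReal_le_ofReal ?_)) 1
    exact div_le_div_of_nonneg_right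
      (mul_le_of_le_one_right (mul_nonneg hδ.le (variance_nonneg _ _)) hsum) (sq_nonneg c)
  calc μ {x | |x| < t} ^ K * (1 - ENNReal.ofReal (δ * Var[id; μ] / c ^ 2))
      ≤ μ {x | |x| < t} ^ #S * P {ω | ∑ l ∈ Sᶜ, a l * Z l ω ∈ {x | |x| < c}} :=
        mul_le_mul' (pow_le_pow_of_le_one bot_le prob_le_one hS) hsmall
    _ = P ((⋂ l ∈ S, Z l ⁻¹' {x | |x| < t}) ∩ {ω | ∑ l ∈ Sᶜ, a l * Z l ω ∈ {x | |x| < c}}) := by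
        rw [hind.measure_biInter_inter_sum_mul_eq_mul hZm disjoint_compl_right hball
          (measurableSet_lt (by fun_prop) measurable_const), hbig]
    _ ≤ P {ω | |∑ l, a l * Z l ω| < K * t + c} := measure_mono fun ω ⟨hω, hω'⟩ =>
        abs_sum_mul_lt_of_abs_lt ha1 hS ht (by simpa using hω) hω'

end IdenticallyDistributed

theorem exists_pos_ofReal_le_measure_abs_sum_mul_lt {μ : Measure ℝ} [IsProbabilityMeasure μ]
    (hμ : MemLp id 2 μ) (hmean : ∫ x, x ∂μ = 0) (hμ0 : ∀ t > 0, μ {x | |x| < t} ≠ 0) {ε : ℝ}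
    (hε : 0 < ε) :
    ∃ p : ℝ, 0 < p ∧ ∀ (Ω : Type*) [MeasurableSpace Ω] (P : Measure Ω) [IsProbabilityMeasure P]
      (ι : Type*) [Fintype ι] (Z : ι → Ω → ℝ), (∀ l, Measurable (Z l)) →
      (∀ l, P.map (Z l) = μ) → iIndepFun Z P → ∀ a : ι → ℝ, ∑ l, |a l| ≤ 1 →
        ENNReal.ofReal p ≤ P {ω | |∑ l, a l * Z l ω| < ε} := by
  set v := Var[id; μ]
  have hv : 0 ≤ v := variance_nonneg _ _
  -- chosen so that Chebyshev at level `ε / 2` costs at most `1 / 2`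
  set δ := ε ^ 2 / (8 * (v + 1))
  have hδ : 0 < δ := by positivity
  set K := ⌈δ⁻¹⌉₊
  have hK : 1 ≤ K * δ := by
    rw [← inv_mul_cancel₀ hδ.ne']
    exact mul_le_mul_of_nonneg_right (Nat.le_ceil _) hδ.le
  have hK0 : (0 : ℝ) < K := by exact_mod_cast Nat.ceil_pos.2 (inv_pos.2 hδ)
  set t := ε / (2 * K)
  have ht : 0 < t := by positivity
  have hq : 0 < μ.real {x | |x| < t} := ENNReal.toReal_pos (hμ0 t ht) (measure_ne_top _ _)
  refine ⟨μ.real {x | |x| < t} ^ K / 2, by positivity,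
    fun Ω _ P _ ι _ Z hZm hlaw hind a ha => ?_⟩
  have hcheb : δ * v / (ε / 2) ^ 2 ≤ 1 / 2 := by
    rw [div_le_iff₀ (by positivity)]
    simp only [δ]
    field_simp
    nlinarith
  have hhalf : ENNReal.ofReal (1 / 2) ≤ 1 - ENNReal.ofReal (δ * v / (ε / 2) ^ 2) := by
    refine ENNReal.le_sub_of_add_le_left ENNReal.ofReal_ne_top ?_
    rw [← ENNReal.ofReal_add (by positivity) (by norm_num), ← ENNReal.ofReal_one]
    exact ENNReal.ofReal_le_ofReal (by linarith)
  have hsplit : (K : ℝ) * t + ε / 2 = ε := by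
    simp only [t]
    field_simp
    ring
  calc ENNReal.ofReal (μ.real {x | |x| < t} ^ K / 2)
      = μ {x | |x| < t} ^ K * ENNReal.ofReal (1 / 2) := by
        rw [div_eq_mul_one_div, ENNReal.ofReal_mul (by positivity), ENNReal.ofReal_pow hq.le,
          measureReal_def, ENNReal.ofReal_toReal (measure_ne_top _ _)]
    _ ≤ μ {x | |x| < t} ^ K * (1 - ENNReal.ofReal (δ * v / (ε / 2) ^ 2)) := by gcongr
    _ ≤ P {ω | |∑ l, a l * Z l ω| < K * t + ε / 2} :=
        measure_abs_lt_pow_mul_le_measure_abs_sum_mul_lt hZm hlaw hind hμ hmean ha hδ hK ht.le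
          (half_pos hε)
    _ = P {ω | |∑ l, a l * Z l ω| < ε} := by rw [hsplit]

lemma integral_sq_gaussianReal (m : ℝ) (v : ℝ≥0) : ∫ x, x ^ 2 ∂gaussianReal m v = m ^ 2 + v := by
  have h := variance_eq_sub (memLp_id_gaussianReal' (μ := m) (v := v) 2 (by norm_num))
  simp only [variance_id_gaussianReal, id, Pi.pow_apply, integral_id_gaussianReal] at h
  linarith

lemma memLp_sq_gaussianReal (m : ℝ) (v : ℝ≥0) : MemLp (fun x : ℝ => x ^ 2) 2 (gaussianReal m v) := by
  convert (memLp_id_gaussianReal (μ := m) (v := v) 4).norm_rpow_div 2 using 1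
  · ext x; simp
  · rw [ENNReal.eq_div_iff (by norm_num) (by norm_num)]; norm_num

lemma memLp_id_map_sq_sub_one_gaussianReal :
    MemLp id 2 ((gaussianReal 0 1).map fun x => x ^ 2 - 1) := by
  rw [memLp_map_measure_iff aestronglyMeasurable_id (by fun_prop)]
  exact (memLp_sq_gaussianReal 0 1).sub (memLp_const 1)

lemma integral_id_map_sq_sub_one_gaussianReal :
    ∫ x, x ∂(gaussianReal 0 1).map (fun x => x ^ 2 - 1) = 0 := by
  rw [integral_map (f := fun x => x) (by fun_prop) aestronglyMeasurable_id,
    integral_sub ((memLp_sq_gaussianReal 0 1).integrable one_le_two) (integrable_const 1),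
    integral_sq_gaussianReal]
  simp

lemma map_sq_sub_one_gaussianReal_abs_lt_ne_zero {t : ℝ} (ht : 0 < t) :
    (gaussianReal 0 1).map (fun x => x ^ 2 - 1) {x | |x| < t} ≠ 0 := by
  rw [Measure.map_apply (by fun_prop) (measurableSet_lt (by fun_prop) measurable_const)]
  have hopen : IsOpen ((fun x : ℝ => x ^ 2 - 1) ⁻¹' {x | |x| < t}) :=
    (isOpen_lt (by fun_prop) continuous_const).preimage (by fun_prop)
  exact fun h => hopen.measure_ne_zero volume ⟨1, by simpa using ht⟩
    (gaussianReal_absolutelyContinuous' 0 one_ne_zero h)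

/-- Gaussian instance of the Bryc–Dembo small-ball lemma: for
independent standard Gaussians `Y₁,…,Y_m` and weights with `Σ|a_l| ≤ 1`, the
probability that `|Σ a_l (Y_l² − 1)| < ε` is bounded below by some `p > 0`
depending only on `ε`. -/
theorem bryc_dembo_gaussian_small_ball (ε : ℝ) (hε : 0 < ε) :
    ∃ p : ℝ, 0 < p ∧
      ∀ (Ω : Type) (_ : MeasurableSpace Ω) (P : Measure Ω), IsProbabilityMeasure P →
        ∀ (m : ℕ) (Y : Fin m → Ω → ℝ),
          (∀ l, Measurable (Y l)) →
          (∀ l, Measure.map (Y l) P = gaussianReal 0 1) →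
          iIndepFun Y P →
          ∀ a : Fin m → ℝ, (∑ l, |a l|) ≤ 1 →
            ENNReal.ofReal p ≤ P {ω | |∑ l, a l * ((Y l ω) ^ 2 - 1)| < ε} := by
  have : IsProbabilityMeasure ((gaussianReal 0 1).map fun x => x ^ 2 - 1) :=
    Measure.isProbabilityMeasure_map (by fun_prop)
  obtain ⟨p, hp, hsmall⟩ := exists_pos_ofReal_le_measure_abs_sum_mul_lt
    memLp_id_map_sq_sub_one_gaussianReal integral_id_map_sq_sub_one_gaussianReal
    (fun _ ht => map_sq_sub_one_gaussianReal_abs_lt_ne_zero ht) hε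
  refine ⟨p, hp, fun Ω _ P _ m Y hYm hYlaw hY a ha => ?_⟩
  have hlaw : ∀ l, P.map (fun ω => Y l ω ^ 2 - 1) = (gaussianReal 0 1).map fun x => x ^ 2 - 1 :=
    fun l => by rw [← hYlaw l, Measure.map_map (by fun_prop) (hYm l)]; rfl
  exact hsmall Ω P (Fin m) (fun l ω => Y l ω ^ 2 - 1) (fun l => by fun_prop) hlaw
    (hY.comp (fun _ x => x ^ 2 - 1) fun _ => by fun_prop) a ha
end
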